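/- arXiv:math/0302144 — 11 statements merged into one kernel-verified Lean document; each statement's English description precedes it below -/
import Mathlib

section
/- For every real number ω ≥ 0 one has: ‖T_t‖ ≤ e^{ωt} for all t ≥ 0 if and only if N′(0+) ≤ ω, where N′(0+) = lim_{ε→0+} ε^{-1}(N(ε) − N(0)) ∈ [0,+∞]. Consequently the constant ρ = inf{ω : ‖T_t‖ ≤ e^{ωt} for all t ≥ 0} equals N′(0+), and moreover N′(0+) ≥ limsup_{t→0+} t^{-1}(‖T_t‖ − 1). -/
open Filter Set Real

/-!
Let `ν` be the least concave majorant of `log ‖T ·‖` on `[0, ∞)`; `‖T 0‖ = 1` forces `ν 0 = 0`.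
Then `‖T t‖ ≤ e^{ωt}` on `[0, ∞)` says that the concave function `t ↦ ω t` majorises
`log ‖T ·‖`, i.e. that `ν t ≤ ω t`. If so, `N = exp ∘ ν` lies below `e^{ωt}`, whose right
derivative at `0` is `ω`. Conversely, by concavity each chord slope `ν t / t` is at most `ν ε / ε`
for `ε ≤ t`, and `e^x - 1 ≥ x` turns this into a lower bound for the difference quotients of `N`,
so `N′(0+) ≥ ν t / t`. The Dini bound follows from `‖T t‖ ≤ N t`.
-/

structure IsLeastConcaveMajorantOn (s : Set ℝ) (g ν : ℝ → ℝ) : Prop where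
  concaveOn : ConcaveOn ℝ s ν
  le : ∀ t ∈ s, g t ≤ ν t
  le_of_concaveOn : ∀ κ : ℝ → ℝ, ConcaveOn ℝ s κ → (∀ t ∈ s, g t ≤ κ t) → ∀ t ∈ s, ν t ≤ κ t

theorem ConcaveOn.update_Ici_left {f : ℝ → ℝ} {a c : ℝ} (hf : ConcaveOn ℝ (Ici a) f)
    (hc : c ≤ f a) : ConcaveOn ℝ (Ici a) (Function.update f a c) := by
  have hle : ∀ x, Function.update f a c x ≤ f x := fun x => by
    by_cases hx : x = a
    · subst hx; simpa using hc
    · simp [hx]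
  refine ⟨convex_Ici a, fun x hx y hy p q hp hq hpq => ?_⟩
  simp only [smul_eq_mul] at hpq ⊢
  by_cases hz : p * x + q * y = a
  · -- a point of `Ici a` with positive weight in a combination equal to `a` is `a` itself
    have hsum : p * (x - a) + q * (y - a) = 0 := by linear_combination hz - a * hpq
    obtain ⟨hpx, hqy⟩ := (add_eq_zero_iff_of_nonneg (mul_nonneg hp (sub_nonneg.2 (mem_Ici.1 hx)))
      (mul_nonneg hq (sub_nonneg.2 (mem_Ici.1 hy)))).1 hsum
    have hpx' : p * Function.update f a c x = p * c := by
      rcases mul_eq_zero.1 hpx with h | h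
      · simp [h]
      · simp [sub_eq_zero.1 h]
    have hqy' : q * Function.update f a c y = q * c := by
      rcases mul_eq_zero.1 hqy with h | h
      · simp [h]
      · simp [sub_eq_zero.1 h]
    rw [hz, hpx', hqy', ← add_mul, hpq, one_mul, Function.update_self]
  · rw [Function.update_of_ne hz]
    calc p * Function.update f a c x + q * Function.update f a c y ≤ p * f x + q * f y := by
          gcongr <;> exact hle _
      _ ≤ f (p * x + q * y) := by simpa only [smul_eq_mul] using hf.2 hx hy hp hq hpq

namespace IsLeastConcaveMajorantOn

variable {s : Set ℝ} {g ν : ℝ → ℝ}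

theorem le_iff (hν : IsLeastConcaveMajorantOn s g ν) {κ : ℝ → ℝ} (hκ : ConcaveOn ℝ s κ) :
    (∀ t ∈ s, ν t ≤ κ t) ↔ ∀ t ∈ s, g t ≤ κ t :=
  ⟨fun h t ht => (hν.le t ht).trans (h t ht), hν.le_of_concaveOn κ hκ⟩

theorem apply_left {a : ℝ} (hν : IsLeastConcaveMajorantOn (Ici a) g ν) : ν a = g a := by
  have hga : g a ≤ ν a := hν.le a self_mem_Ici
  refine le_antisymm ?_ hga
  have hmaj : ∀ t ∈ Ici a, g t ≤ Function.update ν a (g a) t := fun t ht => by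
    by_cases h : t = a
    · subst h; simp
    · simpa [h] using hν.le t ht
  simpa using hν.le_of_concaveOn _ (hν.concaveOn.update_Ici_left hga) hmaj a self_mem_Ici

end IsLeastConcaveMajorantOn

theorem tendsto_inv_mul_exp_mul_sub_one (ω : ℝ) :
    Tendsto (fun ε : ℝ => ε⁻¹ * (exp (ω * ε) - 1)) (nhdsWithin 0 (Ioi 0)) (nhds ω) := by
  have hder : HasDerivAt (fun x : ℝ => exp (ω * x)) ω 0 := by
    simpa using ((hasDerivAt_id (0 : ℝ)).const_mul ω).exp
  refine ((hasDerivAt_iff_tendsto_slope.1 hder).mono_left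
    (nhdsWithin_mono 0 fun x hx => ne_of_gt hx)).congr fun ε => ?_
  simp [slope_def_field, div_eq_inv_mul]

section RightDerivExp

variable {ν : ℝ → ℝ} {Np : EReal}

theorem ConcaveOn.div_le_inv_mul_exp_sub_one (hν : ConcaveOn ℝ (Ici 0) ν) (hν0 : ν 0 = 0)
    {ε t : ℝ} (hε : 0 < ε) (hεt : ε ≤ t) : ν t / t ≤ ε⁻¹ * (exp (ν ε) - 1) := by
  have hchord : ν t / t ≤ ν ε / ε := by
    have := hν.neg.secant_mono self_mem_Ici hε.le (hε.le.trans hεt) hε.ne'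
      (hε.trans_le hεt).ne' hεt
    simp only [Pi.neg_apply, hν0, neg_zero, sub_zero] at this
    rwa [neg_div, neg_div, neg_le_neg_iff] at this
  calc ν t / t ≤ ν ε / ε := hchord
    _ = ε⁻¹ * ν ε := div_eq_inv_mul _ _
    _ ≤ ε⁻¹ * (exp (ν ε) - 1) :=
        mul_le_mul_of_nonneg_left (by linarith [add_one_le_exp (ν ε)]) (inv_nonneg.2 hε.le)

variable (hNp : Tendsto (fun ε : ℝ => ((ε⁻¹ * (exp (ν ε) - 1) : ℝ) : EReal))
  (nhdsWithin 0 (Ioi 0)) (nhds Np))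
include hNp

theorem ConcaveOn.div_le_of_tendsto (hν : ConcaveOn ℝ (Ici 0) ν) (hν0 : ν 0 = 0) {t : ℝ}
    (ht : 0 < t) : ((ν t / t : ℝ) : EReal) ≤ Np := by
  refine ge_of_tendsto hNp ?_
  filter_upwards [Ioc_mem_nhdsGT ht] with ε hε
  exact EReal.coe_le_coe_iff.2 (hν.div_le_inv_mul_exp_sub_one hν0 hε.1 hε.2)

theorem le_coe_of_tendsto_of_le_mul {ω : ℝ} (hle : ∀ t ∈ Ici 0, ν t ≤ ω * t) :
    Np ≤ ω := by
  refine le_of_tendsto_of_tendsto hNp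
    ((continuous_coe_real_ereal.tendsto ω).comp (tendsto_inv_mul_exp_mul_sub_one ω)) ?_
  filter_upwards [self_mem_nhdsWithin] with ε hε
  rw [Function.comp_apply, EReal.coe_le_coe_iff]
  gcongr
  exacts [inv_nonneg.2 (le_of_lt hε), hle ε (mem_Ioi.1 hε).le]

theorem ConcaveOn.le_mul_iff_le_of_tendsto (hν : ConcaveOn ℝ (Ici 0) ν) (hν0 : ν 0 = 0)
    (ω : ℝ) : (∀ t ∈ Ici 0, ν t ≤ ω * t) ↔ Np ≤ ω := by
  refine ⟨le_coe_of_tendsto_of_le_mul hNp, fun hNpω t ht => ?_⟩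
  rcases (mem_Ici.1 ht).eq_or_lt with rfl | ht
  · simp [hν0]
  · have := EReal.coe_le_coe_iff.1 ((hν.div_le_of_tendsto hNp hν0 ht).trans hNpω)
    rwa [div_le_iff₀ ht] at this

theorem limsup_inv_mul_sub_one_le_of_tendsto {f : ℝ → ℝ} (hf : ∀ t > 0, f t ≤ exp (ν t)) :
    limsup (fun t : ℝ => ((t⁻¹ * (f t - 1) : ℝ) : EReal)) (nhdsWithin 0 (Ioi 0)) ≤ Np := by
  rw [← hNp.limsup_eq]
  refine limsup_le_limsup ?_
  filter_upwards [self_mem_nhdsWithin] with t ht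
  rw [EReal.coe_le_coe_iff]
  gcongr
  exacts [inv_nonneg.2 (le_of_lt ht), hf t ht]

end RightDerivExp

theorem le_exp_iff_log_le {x y : ℝ} (hx : 0 ≤ x) (hy : 0 ≤ y) : x ≤ exp y ↔ log x ≤ y := by
  rcases hx.eq_or_lt with rfl | hx
  · simp [hy, (exp_pos y).le]
  · exact (log_le_iff_le_exp hx).symm

theorem stmt_2_general
    {B D : Type*} [NormedAddCommGroup B] [NormedSpace ℂ B]
    [NormedAddCommGroup D] [NormedSpace ℂ D]
    (T : ℝ → (D →L[ℂ] B))
    (hT0 : ‖T 0‖ = 1)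
    (ν : ℝ → ℝ)
    (hν_concave : ConcaveOn ℝ (Set.Ici (0:ℝ)) ν)
    (hν_ge : ∀ t : ℝ, 0 ≤ t → Real.log ‖T t‖ ≤ ν t)
    (hν_min : ∀ κ : ℝ → ℝ, ConcaveOn ℝ (Set.Ici (0:ℝ)) κ →
        (∀ t : ℝ, 0 ≤ t → Real.log ‖T t‖ ≤ κ t) → ∀ t : ℝ, 0 ≤ t → ν t ≤ κ t)
    (Np : EReal)
    (hNp : Filter.Tendsto
      (fun ε : ℝ => ((ε⁻¹ * (Real.exp (ν ε) - Real.exp (ν 0)) : ℝ) : EReal))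
      (nhdsWithin 0 (Set.Ioi 0)) (nhds Np)) :
    (∀ ω : ℝ, 0 ≤ ω →
      ((∀ t : ℝ, 0 ≤ t → ‖T t‖ ≤ Real.exp (ω * t)) ↔ Np ≤ (ω : EReal))) ∧
    Filter.limsup (fun t : ℝ => ((t⁻¹ * (‖T t‖ - 1) : ℝ) : EReal))
        (nhdsWithin 0 (Set.Ioi 0)) ≤ Np := by
  have hν : IsLeastConcaveMajorantOn (Ici 0) (fun t => log ‖T t‖) ν :=
    ⟨hν_concave, hν_ge, hν_min⟩
  have hν0 : ν 0 = 0 := by simpa [hT0] using hν.apply_left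
  simp only [hν0, exp_zero] at hNp
  refine ⟨fun ω hω => ?_, limsup_inv_mul_sub_one_le_of_tendsto hNp fun t ht =>
    (le_exp_log _).trans (exp_le_exp.2 (hν_ge t ht.le))⟩
  calc (∀ t : ℝ, 0 ≤ t → ‖T t‖ ≤ exp (ω * t)) ↔ ∀ t ∈ Ici (0 : ℝ), log ‖T t‖ ≤ ω * t :=
        forall₂_congr fun t ht => le_exp_iff_log_le (norm_nonneg _) (mul_nonneg hω ht)
    _ ↔ ∀ t ∈ Ici (0 : ℝ), ν t ≤ ω * t := (hν.le_iff ((concaveOn_id (convex_Ici 0)).smul hω)).symm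
    _ ↔ Np ≤ ω := hν_concave.le_mul_iff_le_of_tendsto hNp hν0 ω

/-- For every real `ω ≥ 0`: `‖T t‖ ≤ e^{ωt}` for all `t ≥ 0` iff
`N′(0+) ≤ ω`, where `N′(0+) = lim_{ε→0+} ε⁻¹ (N ε − N 0) ∈ [0,∞]` (an extended real).
Consequently `ρ = inf {ω : ‖T t‖ ≤ e^{ωt} ∀ t ≥ 0}` equals `N′(0+)`, and moreover
`N′(0+) ≥ limsup_{t→0+} t⁻¹ (‖T t‖ − 1)`.  Here `N = exp ν` is the upper log-concave
envelope of `t ↦ ‖T t‖` and `ω₀ = 0`. -/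
theorem stmt_2
    {B D : Type*} [NormedAddCommGroup B] [NormedSpace ℂ B] [CompleteSpace B]
    [NormedAddCommGroup D] [NormedSpace ℂ D] [CompleteSpace D]
    (T : ℝ → (D →L[ℂ] B))
    (hT0 : ‖T 0‖ = 1)
    (hcont : ∀ f : D, ContinuousOn (fun t => T t f) (Set.Ici (0:ℝ)))
    (Mb ωb : ℝ) (hbound : ∀ t : ℝ, 0 ≤ t → ‖T t‖ ≤ Mb * Real.exp (ωb * t))
    (hω₀ : Filter.limsup (fun t : ℝ => ((Real.log ‖T t‖ / t : ℝ) : EReal)) Filter.atTop = 0)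
    (ν : ℝ → ℝ)
    (hν_concave : ConcaveOn ℝ (Set.Ici (0:ℝ)) ν)
    (hν_ge : ∀ t : ℝ, 0 ≤ t → Real.log ‖T t‖ ≤ ν t)
    (hν_min : ∀ κ : ℝ → ℝ, ConcaveOn ℝ (Set.Ici (0:ℝ)) κ →
        (∀ t : ℝ, 0 ≤ t → Real.log ‖T t‖ ≤ κ t) → ∀ t : ℝ, 0 ≤ t → ν t ≤ κ t)
    (Np : EReal)
    (hNp : Filter.Tendsto
      (fun ε : ℝ => ((ε⁻¹ * (Real.exp (ν ε) - Real.exp (ν 0)) : ℝ) : EReal))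
      (nhdsWithin 0 (Set.Ioi 0)) (nhds Np)) :
    (∀ ω : ℝ, 0 ≤ ω →
      ((∀ t : ℝ, 0 ≤ t → ‖T t‖ ≤ Real.exp (ω * t)) ↔ Np ≤ (ω : EReal))) ∧
    Filter.limsup (fun t : ℝ => ((t⁻¹ * (‖T t‖ - 1) : ℝ) : EReal))
        (nhdsWithin 0 (Set.Ioi 0)) ≤ Np :=
  stmt_2_general T hT0 ν hν_concave hν_ge hν_min Np hNp
end

section
/- If a > 0, b ∈ ℝ and c := a‖R_{a+ib}‖ ≥ 1, then M(ω) ≥ (a − ω)c/a for all ω with 0 < ω ≤ r := a(1 − 1/c), and M(ω) ≥ 1 for all ω > 0. -/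
open MeasureTheory Filter Set

/-!
Since `ω₀ = 0 < ω`, the function `‖T t‖ e^{-ωt}` is eventually at most `1` and bounded on compact
intervals by the a priori bound, so `M(ω)` is a genuine supremum, at least `‖T 0‖ = 1`, and
`‖T t‖ ≤ M(ω) e^{ωt}`. Estimating the Laplace integral under this bound gives
`‖R_z‖ ≤ M(ω) / (Re z - ω)` whenever `ω < Re z`, which is the first inequality for `ω < a`;
for `ω ≥ a` its left-hand side is nonpositive.
-/

theorem eventually_le_exp_of_limsup_log_div_lt {g : ℝ → ℝ} {ω : ℝ}
    (h : limsup (fun t : ℝ => ((Real.log (g t) / t : ℝ) : EReal)) atTop < ω) :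
    ∀ᶠ t in atTop, g t ≤ Real.exp (ω * t) := by
  filter_upwards [eventually_lt_of_limsup_lt h, eventually_gt_atTop 0] with t hlog ht
  rcases le_or_gt (g t) 0 with hg | hg
  · exact hg.trans (Real.exp_pos _).le
  · rw [← Real.exp_log hg, Real.exp_le_exp, ← div_le_iff₀ ht]
    exact_mod_cast hlog.le

theorem bddAbove_image_mul_exp_neg {g : ℝ → ℝ} {Mb ωb ω : ℝ}
    (hbound : ∀ t, 0 ≤ t → g t ≤ Mb * Real.exp (ωb * t))
    (hlimsup : limsup (fun t : ℝ => ((Real.log (g t) / t : ℝ) : EReal)) atTop < ω) :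
    BddAbove ((fun t => g t * Real.exp (-(ω * t))) '' Ici 0) := by
  obtain ⟨t₁, ht₁⟩ := eventually_atTop.mp (eventually_le_exp_of_limsup_log_div_lt hlimsup)
  obtain ⟨C, hC⟩ := (isCompact_Icc (a := 0) (b := t₁)).bddAbove_image
    (f := fun t => Mb * Real.exp (ωb * t) * Real.exp (-(ω * t))) (by fun_prop)
  refine ⟨max 1 C, ?_⟩
  rintro _ ⟨t, ht, rfl⟩
  rcases le_or_gt t₁ t with htail | hhead
  · calc g t * Real.exp (-(ω * t)) ≤ Real.exp (ω * t) * Real.exp (-(ω * t)) := by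
          gcongr; exact ht₁ t htail
      _ = 1 := by rw [← Real.exp_add, add_neg_cancel, Real.exp_zero]
      _ ≤ max 1 C := le_max_left _ _
  · calc g t * Real.exp (-(ω * t)) ≤ Mb * Real.exp (ωb * t) * Real.exp (-(ω * t)) := by
          gcongr; exact hbound t ht
      _ ≤ C := hC ⟨t, ⟨ht, hhead.le⟩, rfl⟩
      _ ≤ max 1 C := le_max_right _ _

theorem norm_integral_Ioi_cexp_smul_le {E : Type*} [NormedAddCommGroup E] [NormedSpace ℂ E]
    {u : ℝ → E} {C ω : ℝ} {z : ℂ} (hωz : ω < z.re)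
    (hu : ∀ s, 0 ≤ s → ‖u s‖ ≤ C * Real.exp (ω * s)) :
    ‖∫ s in Ioi (0:ℝ), Complex.exp (-(z * s)) • u s‖ ≤ C / (z.re - ω) := by
  have hk : -(z.re - ω) < 0 := by linarith
  have hpoint : ∀ s ∈ Ioi (0:ℝ),
      ‖Complex.exp (-(z * s)) • u s‖ ≤ C * Real.exp (-(z.re - ω) * s) := by
    intro s hs
    rw [norm_smul, Complex.norm_exp]
    calc Real.exp (-(z * s)).re * ‖u s‖ ≤ Real.exp (-(z.re * s)) * (C * Real.exp (ω * s)) := by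
          simp only [Complex.neg_re, Complex.re_mul_ofReal]
          gcongr
          exact hu s hs.le
      _ = C * Real.exp (-(z.re - ω) * s) := by
          rw [mul_left_comm, ← Real.exp_add]; ring_nf
  calc ‖∫ s in Ioi (0:ℝ), Complex.exp (-(z * s)) • u s‖
      ≤ ∫ s in Ioi (0:ℝ), C * Real.exp (-(z.re - ω) * s) :=
        norm_integral_le_of_norm_le ((integrableOn_exp_mul_Ioi hk 0).const_mul C)
          ((ae_restrict_iff' measurableSet_Ioi).mpr (ae_of_all _ hpoint))
    _ = C / (z.re - ω) := by
        rw [integral_const_mul, integral_exp_mul_Ioi hk]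
        field_simp
        simp

theorem opNorm_le_of_eq_integral_Ioi_cexp_smul {E F : Type*} [NormedAddCommGroup E]
    [NormedSpace ℂ E] [NormedAddCommGroup F] [NormedSpace ℂ F]
    {T : ℝ → E →L[ℂ] F} {R : E →L[ℂ] F} {M ω : ℝ} {z : ℂ} (hωz : ω < z.re)
    (hT : ∀ t, 0 ≤ t → ‖T t‖ ≤ M * Real.exp (ω * t))
    (hR : ∀ f, R f = ∫ s in Ioi (0:ℝ), Complex.exp (-(z * s)) • T s f) :
    ‖R‖ ≤ M / (z.re - ω) := by
  have hM : 0 ≤ M := by simpa using (norm_nonneg _).trans (hT 0 le_rfl)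
  refine R.opNorm_le_bound (div_nonneg hM (sub_nonneg.mpr hωz.le)) fun f => ?_
  rw [hR]
  refine (norm_integral_Ioi_cexp_smul_le (u := fun s => T s f) (C := M * ‖f‖) hωz
    fun s hs => ?_).trans_eq (by ring)
  calc ‖T s f‖ ≤ ‖T s‖ * ‖f‖ := (T s).le_opNorm f
    _ ≤ M * Real.exp (ω * s) * ‖f‖ := by gcongr; exact hT s hs
    _ = M * ‖f‖ * Real.exp (ω * s) := by ring

theorem le_sSup_image_mul_exp {g : ℝ → ℝ} {ω t : ℝ}
    (hbdd : BddAbove ((fun s => g s * Real.exp (-(ω * s))) '' Ici 0)) (ht : 0 ≤ t) :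
    g t ≤ sSup ((fun s => g s * Real.exp (-(ω * s))) '' Ici 0) * Real.exp (ω * t) := by
  rw [← div_le_iff₀ (Real.exp_pos _), div_eq_mul_inv, ← Real.exp_neg]
  exact le_csSup hbdd ⟨t, ht, rfl⟩

theorem stmt_3_general
    {B : Type*} [NormedAddCommGroup B] [NormedSpace ℂ B]
    (T : ℝ → (B →L[ℂ] B))
    (hT0 : ‖T 0‖ = 1)
    (Mb ωb : ℝ) (hbound : ∀ t : ℝ, 0 ≤ t → ‖T t‖ ≤ Mb * Real.exp (ωb * t))
    (hω₀ : Filter.limsup (fun t : ℝ => ((Real.log ‖T t‖ / t : ℝ) : EReal)) Filter.atTop = 0)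
    (R : ℂ → (B →L[ℂ] B))
    (hR : ∀ z : ℂ, 0 < z.re → ∀ f : B,
      R z f = ∫ s in Set.Ioi (0:ℝ), Complex.exp (-(z * s)) • T s f)
    (a b : ℝ) (ha : 0 < a) (c : ℝ)
    (hc : c = a * ‖R (a + b * Complex.I)‖) :
    (∀ ω : ℝ, 0 < ω → ω ≤ a * (1 - 1/c) →
      (a - ω) * c / a ≤ sSup ((fun s => ‖T s‖ * Real.exp (-(ω * s))) '' Set.Ici 0)) ∧
    (∀ ω : ℝ, 0 < ω →
      1 ≤ sSup ((fun s => ‖T s‖ * Real.exp (-(ω * s))) '' Set.Ici 0)) := by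
  have hbdd (ω : ℝ) (hω : 0 < ω) :
      BddAbove ((fun s => ‖T s‖ * Real.exp (-(ω * s))) '' Ici 0) :=
    bddAbove_image_mul_exp_neg (g := fun t => ‖T t‖) hbound (by rw [hω₀]; exact_mod_cast hω)
  have hone (ω : ℝ) (hω : 0 < ω) :
      1 ≤ sSup ((fun s => ‖T s‖ * Real.exp (-(ω * s))) '' Ici 0) :=
    le_csSup (hbdd ω hω) ⟨0, self_mem_Ici, by simp [hT0]⟩
  refine ⟨fun ω hω _ => ?_, hone⟩
  have hre : (a + b * Complex.I).re = a := by simp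
  rcases lt_or_ge ω a with hωa | haω
  · have hRz := opNorm_le_of_eq_integral_Ioi_cexp_smul (hre ▸ hωa)
      (fun t ht => le_sSup_image_mul_exp (hbdd ω hω) ht) (hR _ (by rw [hre]; exact ha))
    rw [hre, le_div_iff₀' (sub_pos.mpr hωa)] at hRz
    rwa [hc, mul_div_assoc, mul_div_cancel_left₀ _ ha.ne']
  · calc (a - ω) * c / a ≤ 0 := by
          rw [hc]; exact div_nonpos_of_nonpos_of_nonneg
            (mul_nonpos_of_nonpos_of_nonneg (by linarith) (by positivity)) ha.le
      _ ≤ 1 := zero_le_one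
      _ ≤ _ := hone ω hω

/-- If `a > 0`, `b ∈ ℝ` and `c := a ‖R_{a+ib}‖ ≥ 1`, then
`M(ω) ≥ (a − ω) c / a` for all `ω` with `0 < ω ≤ r := a (1 − 1/c)`, and `M(ω) ≥ 1`
for all `ω > 0`, where `M(ω) = sup {‖T t‖ e^{−ωt} : t ≥ 0}` and `ω₀ = 0`. -/
theorem stmt_3
    {B : Type*} [NormedAddCommGroup B] [NormedSpace ℂ B] [CompleteSpace B]
    (T : ℝ → (B →L[ℂ] B))
    (hT0 : ‖T 0‖ = 1)
    (hcont : ∀ f : B, ContinuousOn (fun t => T t f) (Set.Ici (0:ℝ)))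
    (Mb ωb : ℝ) (hbound : ∀ t : ℝ, 0 ≤ t → ‖T t‖ ≤ Mb * Real.exp (ωb * t))
    (hω₀ : Filter.limsup (fun t : ℝ => ((Real.log ‖T t‖ / t : ℝ) : EReal)) Filter.atTop = 0)
    (R : ℂ → (B →L[ℂ] B))
    (hRint : ∀ z : ℂ, 0 < z.re → ∀ f : B,
      MeasureTheory.IntegrableOn (fun s : ℝ => Complex.exp (-(z * s)) • T s f) (Set.Ioi 0))
    (hR : ∀ z : ℂ, 0 < z.re → ∀ f : B,
      R z f = ∫ s in Set.Ioi (0:ℝ), Complex.exp (-(z * s)) • T s f)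
    (a b : ℝ) (ha : 0 < a) (c : ℝ)
    (hc : c = a * ‖R (a + b * Complex.I)‖) (hc1 : 1 ≤ c) :
    (∀ ω : ℝ, 0 < ω → ω ≤ a * (1 - 1/c) →
      (a - ω) * c / a ≤ sSup ((fun s => ‖T s‖ * Real.exp (-(ω * s))) '' Set.Ici 0)) ∧
    (∀ ω : ℝ, 0 < ω →
      1 ≤ sSup ((fun s => ‖T s‖ * Real.exp (-(ω * s))) '' Set.Ici 0)) :=
  stmt_3_general T hT0 Mb ωb hbound hω₀ R hR a b ha c hc
end

section
/- If a > 0, b ∈ ℝ and c := a‖R_{a+ib}‖ ≥ 1, then with r = a(1 − 1/c) one has N(t) ≥ min{e^{rt}, c} for all t ≥ 0. -/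
/-!
Take a supporting line `ν s ≤ ν t + m (s - t)` of the concave function `ν` at `t > 0`. Since
`ω₀ = 0` its slope satisfies `m ≥ 0`, and `ν 0 ≥ log ‖T 0‖ = 0` gives `m t ≤ ν t`, so if `m ≥ r`
then `ν t ≥ r t`. Otherwise `m < r < a`, and `‖T s‖ ≤ e^{ν t - m t} e^{m s}` bounds the Laplace
transform: `c ≤ a e^{ν t - m t} / (a - m)`. As `a - r = a / c`, convexity of `m ↦ log (a / (a - m))`
gives `log (a / (a - m)) ≤ (m / r) log c`, hence `ν t ≥ (1 - m / r) log c + (m / r) r t`, which is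
at least `min (log c) (r t)`.
-/

open MeasureTheory Filter Set Topology Real

lemma ConcaveOn.exists_le_add_mul_sub {S : Set ℝ} {f : ℝ → ℝ} {x : ℝ} (hf : ConcaveOn ℝ S f)
    (hx : x ∈ interior S) : ∃ m : ℝ, ∀ y ∈ S, f y ≤ f x + m * (y - x) := by
  refine ⟨-derivWithin (-f) (Ioi x) x, fun y hy => ?_⟩
  rcases lt_trichotomy y x with hyx | rfl | hxy
  · have h := (hf.neg.slope_le_leftDeriv_of_mem_interior hy hx hyx).trans
      (hf.neg.leftDeriv_le_rightDeriv_of_mem_interior hx)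
    rw [slope_def_field, div_le_iff₀ (sub_pos.2 hyx)] at h
    simp only [Pi.neg_apply] at h
    linarith
  · simp
  · have h := hf.neg.rightDeriv_le_slope_of_mem_interior hx hy hxy
    rw [slope_def_field, le_div_iff₀ (sub_pos.2 hxy)] at h
    simp only [Pi.neg_apply] at h
    linarith

lemma limsup_div_le_of_le_add_mul {u : ℝ → ℝ} {C δ : ℝ} (h : ∀ᶠ t in atTop, u t ≤ C + δ * t) :
    limsup (fun t : ℝ => ((u t / t : ℝ) : EReal)) atTop ≤ δ := by
  have hlim : Tendsto (fun t : ℝ => ((C / t + δ : ℝ) : EReal)) atTop (𝓝 δ) :=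
    EReal.tendsto_coe.2 (by simpa using (tendsto_const_nhds.div_atTop tendsto_id).add_const δ)
  rw [← hlim.limsup_eq]
  refine limsup_le_limsup ?_
  filter_upwards [h, eventually_gt_atTop 0] with t ht ht0
  refine EReal.coe_le_coe_iff.2 ?_
  rw [div_add' _ _ _ ht0.ne', div_le_div_iff_of_pos_right ht0]
  linarith

lemma norm_integral_cexp_smul_le {E : Type*} [NormedAddCommGroup E] [NormedSpace ℂ E]
    {g : ℝ → E} {z : ℂ} {K m : ℝ} (hm : m < z.re)
    (hg : ∀ s > 0, ‖g s‖ ≤ K * exp (m * s)) :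
    ‖∫ s in Ioi (0 : ℝ), Complex.exp (-(z * s)) • g s‖ ≤ K / (z.re - m) := by
  have hdecay : -(z.re - m) < 0 := by linarith
  calc ‖∫ s in Ioi (0 : ℝ), Complex.exp (-(z * s)) • g s‖
      ≤ ∫ s in Ioi 0, K * exp (-(z.re - m) * s) := by
        refine norm_integral_le_of_norm_le
          ((integrableOn_exp_mul_Ioi hdecay 0).const_mul K) ?_
        refine (ae_restrict_iff' measurableSet_Ioi).2 (ae_of_all _ fun s hs => ?_)
        rw [norm_smul, Complex.norm_exp]
        calc exp (-(z * s)).re * ‖g s‖ ≤ exp (-(z.re * s)) * (K * exp (m * s)) := by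
              simp only [Complex.neg_re, Complex.mul_re, Complex.ofReal_re, Complex.ofReal_im,
                mul_zero, sub_zero]
              exact mul_le_mul_of_nonneg_left (hg s hs) (exp_pos _).le
          _ = K * exp (-(z.re - m) * s) := by
              rw [mul_left_comm, ← exp_add]; ring_nf
    _ = K / (z.re - m) := by
        rw [integral_const_mul, integral_exp_mul_Ioi hdecay, mul_zero, exp_zero]
        field_simp

lemma ContinuousLinearMap.norm_le_of_eq_integral_cexp_smul {E F : Type*}
    [NormedAddCommGroup E] [NormedSpace ℂ E] [NormedAddCommGroup F] [NormedSpace ℂ F]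
    {T : ℝ → E →L[ℂ] F} {L : E →L[ℂ] F} {z : ℂ} {K m : ℝ} (hK : 0 ≤ K) (hm : m < z.re)
    (hT : ∀ s > 0, ‖T s‖ ≤ K * exp (m * s))
    (hL : ∀ f, L f = ∫ s in Ioi (0 : ℝ), Complex.exp (-(z * s)) • T s f) :
    ‖L‖ ≤ K / (z.re - m) := by
  refine L.opNorm_le_bound (div_nonneg hK (by linarith)) fun f => ?_
  rw [hL, div_mul_eq_mul_div]
  refine norm_integral_cexp_smul_le hm fun s hs => ?_
  calc ‖T s f‖ ≤ ‖T s‖ * ‖f‖ := (T s).le_opNorm f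
    _ ≤ K * exp (m * s) * ‖f‖ := by gcongr; exact hT s hs
    _ = _ := by ring

lemma mul_log_div_sub_le {a m r : ℝ} (hm : 0 ≤ m) (hmr : m ≤ r) (hra : r < a) :
    r * log (a / (a - m)) ≤ m * log (a / (a - r)) := by
  rcases hm.eq_or_lt with rfl | hm
  · simp
  have hr : 0 < r := hm.trans_le hmr
  have h := strictConcaveOn_log_Ioi.concaveOn.2 (mem_Ioi.2 (sub_pos.2 hra))
    (mem_Ioi.2 (hr.trans hra)) (div_nonneg hm.le hr.le) (div_nonneg (sub_nonneg.2 hmr) hr.le)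
    (by field_simp; ring)
  rw [smul_eq_mul, smul_eq_mul, smul_eq_mul, smul_eq_mul,
    show m / r * (a - r) + (r - m) / r * a = a - m by field_simp; ring] at h
  rw [log_div (by linarith) (by linarith), log_div (by linarith) (by linarith)]
  have := mul_le_mul_of_nonneg_left h hr.le
  field_simp at this
  nlinarith

lemma min_exp_le_exp_of_le_mul_exp_div {a c m t L : ℝ} (ha : 0 < a) (hc : 1 ≤ c) (ht : 0 ≤ t)
    (hm : 0 ≤ m) (hmt : m * t ≤ L)
    (hbound : m < a * (1 - 1 / c) → c ≤ a * (exp (L - m * t) / (a - m))) :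
    min (exp (a * (1 - 1 / c) * t)) c ≤ exp L := by
  set r := a * (1 - 1 / c)
  rcases le_or_gt r m with hrm | hmr
  · exact (min_le_left _ _).trans (exp_le_exp.2 ((mul_le_mul_of_nonneg_right hrm ht).trans hmt))
  have hc0 : 0 < c := one_pos.trans_le hc
  have hra : a - r = a / c := by simp only [r]; field_simp; ring
  have hr : 0 < r := hm.trans_lt hmr
  have hma : 0 < a - m := by linarith [div_pos ha hc0]
  have hlogc : log c ≤ log (a / (a - m)) + (L - m * t) := by
    have h := log_le_log hc0 (hbound hmr)
    rwa [mul_div_left_comm, log_mul (exp_pos _).ne' (div_pos ha hma).ne', log_exp, add_comm] at h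
  have hconv := mul_log_div_sub_le (a := a) hm hmr.le (by linarith [div_pos ha hc0])
  rw [hra, div_div_cancel₀ ha.ne'] at hconv
  have hmin : min (r * t) (log c) ≤ L := by
    have h1 := mul_le_mul_of_nonneg_left (min_le_left (r * t) (log c)) hm
    have h2 := mul_le_mul_of_nonneg_left (min_le_right (r * t) (log c)) (sub_nonneg.2 hmr.le)
    nlinarith
  calc min (exp (r * t)) c = exp (min (r * t) (log c)) := by
        rw [exp_monotone.map_min, exp_log hc0]
    _ ≤ exp L := exp_le_exp.2 hmin

theorem stmt_4_general
    {B : Type*} [NormedAddCommGroup B] [NormedSpace ℂ B]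
    (T : ℝ → (B →L[ℂ] B))
    (hT0 : ‖T 0‖ = 1)
    (hω₀ : Filter.limsup (fun t : ℝ => ((Real.log ‖T t‖ / t : ℝ) : EReal)) Filter.atTop = 0)
    (ν : ℝ → ℝ)
    (hν_concave : ConcaveOn ℝ (Set.Ici (0:ℝ)) ν)
    (hν_ge : ∀ t : ℝ, 0 ≤ t → Real.log ‖T t‖ ≤ ν t)
    (R : ℂ → (B →L[ℂ] B))
    (hR : ∀ z : ℂ, 0 < z.re → ∀ f : B,
      R z f = ∫ s in Set.Ioi (0:ℝ), Complex.exp (-(z * s)) • T s f)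
    (a b : ℝ) (ha : 0 < a) (c : ℝ)
    (hc : c = a * ‖R (a + b * Complex.I)‖) (hc1 : 1 ≤ c) :
    ∀ t : ℝ, 0 ≤ t →
      min (Real.exp (a * (1 - 1/c) * t)) c ≤ Real.exp (ν t) := by
  intro t ht
  have hν0 : 0 ≤ ν 0 := by simpa [hT0] using hν_ge 0 le_rfl
  rcases ht.eq_or_lt with rfl | ht
  · simpa using (min_le_left _ _).trans (one_le_exp hν0)
  obtain ⟨m, hm⟩ := hν_concave.exists_le_add_mul_sub (by rwa [interior_Ici])
  have hlog : ∀ s ≥ 0, log ‖T s‖ ≤ ν t - m * t + m * s := fun s hs =>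
    (hν_ge s hs).trans (by linarith [hm s hs])
  have hm0 : 0 ≤ m := by
    simpa [hω₀] using limsup_div_le_of_le_add_mul ((eventually_ge_atTop 0).mono hlog)
  refine min_exp_le_exp_of_le_mul_exp_div ha hc1 ht.le hm0 (by linarith [hm 0 self_mem_Ici])
    fun hmr => ?_
  set z : ℂ := a + b * Complex.I
  have hz : z.re = a := by simp [z]
  have hma : m < z.re := by
    rw [hz]; nlinarith [one_div_pos.2 (one_pos.trans_le hc1)]
  have hT : ∀ s > 0, ‖T s‖ ≤ exp (ν t - m * t) * exp (m * s) := fun s hs => by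
    rw [← exp_add]
    exact le_exp_of_log_le (hlog s hs.le)
  have hRz := ContinuousLinearMap.norm_le_of_eq_integral_cexp_smul (exp_pos _).le hma hT
    (hR z (hm0.trans_lt hma))
  rw [hc, ← hz]
  exact mul_le_mul_of_nonneg_left hRz (hz ▸ ha.le)

/-- If `a > 0`, `b ∈ ℝ` and `c := a ‖R_{a+ib}‖ ≥ 1`, then with
`r = a (1 − 1/c)` one has `N t ≥ min (e^{rt}) c` for all `t ≥ 0`, where `N = exp ν`
is the upper log-concave envelope of `t ↦ ‖T t‖` and `ω₀ = 0`. -/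
theorem stmt_4
    {B : Type*} [NormedAddCommGroup B] [NormedSpace ℂ B] [CompleteSpace B]
    (T : ℝ → (B →L[ℂ] B))
    (hT0 : ‖T 0‖ = 1)
    (hcont : ∀ f : B, ContinuousOn (fun t => T t f) (Set.Ici (0:ℝ)))
    (Mb ωb : ℝ) (hbound : ∀ t : ℝ, 0 ≤ t → ‖T t‖ ≤ Mb * Real.exp (ωb * t))
    (hω₀ : Filter.limsup (fun t : ℝ => ((Real.log ‖T t‖ / t : ℝ) : EReal)) Filter.atTop = 0)
    (ν : ℝ → ℝ)
    (hν_concave : ConcaveOn ℝ (Set.Ici (0:ℝ)) ν)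
    (hν_ge : ∀ t : ℝ, 0 ≤ t → Real.log ‖T t‖ ≤ ν t)
    (hν_min : ∀ κ : ℝ → ℝ, ConcaveOn ℝ (Set.Ici (0:ℝ)) κ →
        (∀ t : ℝ, 0 ≤ t → Real.log ‖T t‖ ≤ κ t) → ∀ t : ℝ, 0 ≤ t → ν t ≤ κ t)
    (R : ℂ → (B →L[ℂ] B))
    (hRint : ∀ z : ℂ, 0 < z.re → ∀ f : B,
      MeasureTheory.IntegrableOn (fun s : ℝ => Complex.exp (-(z * s)) • T s f) (Set.Ioi 0))
    (hR : ∀ z : ℂ, 0 < z.re → ∀ f : B,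
      R z f = ∫ s in Set.Ioi (0:ℝ), Complex.exp (-(z * s)) • T s f)
    (a b : ℝ) (ha : 0 < a) (c : ℝ)
    (hc : c = a * ‖R (a + b * Complex.I)‖) (hc1 : 1 ≤ c) :
    ∀ t : ℝ, 0 ≤ t →
      min (Real.exp (a * (1 - 1/c) * t)) c ≤ Real.exp (ν t) :=
  stmt_4_general T hT0 hω₀ ν hν_concave hν_ge R hR a b ha c hc hc1
end

section
/- For all real numbers a > 0, t ≥ 0 and c ≥ 1 one has e^{at} / (1 + (e^{at} − 1)/c) ≤ min{ e^{a(1 − 1/c)t}, c }. -/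
/-- For all real numbers `a > 0`, `t ≥ 0` and `c ≥ 1` one has
`e^{at} / (1 + (e^{at} − 1)/c) ≤ min (e^{a(1 − 1/c)t}) c`. -/
theorem stmt_5 (a t c : ℝ) (ha : 0 < a) (ht : 0 ≤ t) (hc : 1 ≤ c) :
    Real.exp (a * t) / (1 + (Real.exp (a * t) - 1) / c) ≤
      min (Real.exp (a * (1 - 1/c) * t)) c := by
  have hc0 : (0:ℝ) < c := lt_of_lt_of_le one_pos hc
  have hic : 1/c ≤ 1 := by
    rw [div_le_one hc0]; exact hc
  have hic0 : 0 ≤ 1/c := by positivity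
  have hx1 : 1 ≤ Real.exp (a * t) := by
    rw [← Real.exp_zero]
    exact Real.exp_le_exp.2 (by positivity)
  have hD : 0 < 1 + (Real.exp (a * t) - 1) / c := by
    have : 0 ≤ (Real.exp (a * t) - 1) / c := div_nonneg (by linarith) hc0.le
    linarith
  have hconv := convexOn_exp.2 (Set.mem_univ (0:ℝ)) (Set.mem_univ (a*t))
    (by linarith : (0:ℝ) ≤ 1 - 1/c) hic0 (by ring)
  simp only [smul_eq_mul, mul_zero, zero_add, Real.exp_zero, mul_one] at hconv
  -- hconv : exp (1/c * (a*t)) ≤ (1 - 1/c) + 1/c * exp (a*t)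
  rw [le_min_iff]
  constructor
  · rw [div_le_iff₀ hD]
    have key : Real.exp (a * (1 - 1/c) * t) * Real.exp (1/c * (a*t)) = Real.exp (a*t) := by
      rw [← Real.exp_add]; ring_nf
    calc Real.exp (a*t) = Real.exp (a * (1 - 1/c) * t) * Real.exp (1/c * (a*t)) := key.symm
      _ ≤ Real.exp (a * (1 - 1/c) * t) * ((1 - 1/c) + 1/c * Real.exp (a*t)) :=
          mul_le_mul_of_nonneg_left hconv (Real.exp_pos _).le
      _ = Real.exp (a * (1 - 1/c) * t) * (1 + (Real.exp (a * t) - 1) / c) := by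
          field_simp; ring
  · rw [div_le_iff₀ hD]
    have : c * (1 + (Real.exp (a * t) - 1) / c) = c + Real.exp (a*t) - 1 := by
      field_simp; ring
    linarith [this]
end

section
/- Suppose that for every a > 0 the quantity c(a) := a · sup{‖R_{a+ib}‖ : b ∈ ℝ} is finite. Then for every t ≥ 0, N(t) ≥ sup over all a > 0 with c(a) ≥ 1 of min{ e^{r(a)t}, c(a) }, where r(a) = a(1 − 1/c(a)). -/
/-!
Suppose `ν t < r(a) t` and `e^{ν t} < c(a)` for some `t > 0`. Let `σ` be the right derivative of
the concave function `ν` at `t`. Its tangent line dominates `ν`, so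
`‖T s‖ ≤ e^{ν t - σ t} e^{σ s}`; since `ω₀ = 0` this forces `σ ≥ 0`, and comparing with `ν 0 ≥ 0`
gives `σ t ≤ ν t`. Integrating the bound, `c(a) ≤ a e^{ν t - σ t} / (a - σ)`. The logarithm of the
right-hand side is convex in `σ ∈ [0, ν t / t]`, and at both endpoints it is `< log c(a)` by the two
assumptions, a contradiction.
-/

open MeasureTheory Filter Set Topology

theorem ConcaveOn.le_add_rightDeriv_mul_sub {S : Set ℝ} {f : ℝ → ℝ} (hf : ConcaveOn ℝ S f)
    {x y : ℝ} (hx : x ∈ interior S) (hy : y ∈ S) :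
    f y ≤ f x + derivWithin f (Ioi x) x * (y - x) := by
  have hneg : derivWithin (-f) (Ioi x) x = -derivWithin f (Ioi x) x := derivWithin.neg
  rcases lt_trichotomy y x with hyx | rfl | hxy
  · have hslope := (hf.neg.slope_le_leftDeriv_of_mem_interior hy hx hyx).trans
      (hf.neg.leftDeriv_le_rightDeriv_of_mem_interior hx)
    rw [hneg, slope_def_field, div_le_iff₀ (sub_pos.2 hyx)] at hslope
    simp only [Pi.neg_apply] at hslope
    linarith
  · simp
  · have hslope := hf.neg.rightDeriv_le_slope_of_mem_interior hx hy hxy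
    rw [hneg, slope_def_field, le_div_iff₀ (sub_pos.2 hxy)] at hslope
    simp only [Pi.neg_apply] at hslope
    linarith

theorem limsup_div_le_of_le_affine {f : ℝ → ℝ} {A σ : ℝ}
    (h : ∀ᶠ t in atTop, f t ≤ A + σ * t) :
    limsup (fun t : ℝ => ((f t / t : ℝ) : EReal)) atTop ≤ σ := by
  have hlim : Tendsto (fun t : ℝ => ((A / t + σ : ℝ) : EReal)) atTop (𝓝 σ) := by
    refine EReal.tendsto_coe.2 ?_
    simpa using (tendsto_const_nhds.div_atTop tendsto_id).add_const σ
  calc limsup (fun t : ℝ => ((f t / t : ℝ) : EReal)) atTop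
      ≤ limsup (fun t : ℝ => ((A / t + σ : ℝ) : EReal)) atTop := by
        refine limsup_le_limsup ?_
        filter_upwards [h, eventually_gt_atTop 0] with t ht htpos
        rw [EReal.coe_le_coe_iff, div_add' _ _ _ htpos.ne', div_le_div_iff_of_pos_right htpos]
        linarith
    _ = σ := hlim.limsup_eq

theorem norm_integral_exp_smul_le {E : Type*} [NormedAddCommGroup E] [NormedSpace ℂ E]
    {g : ℝ → E} {C σ : ℝ} {z : ℂ} (hz : σ < z.re) (hg : ∀ s > 0, ‖g s‖ ≤ C * Real.exp (σ * s)) :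
    ‖∫ s in Ioi (0:ℝ), Complex.exp (-(z * s)) • g s‖ ≤ C / (z.re - σ) := by
  have hdecay : σ - z.re < 0 := by linarith
  calc ‖∫ s in Ioi (0:ℝ), Complex.exp (-(z * s)) • g s‖
      ≤ ∫ s in Ioi (0:ℝ), C * Real.exp ((σ - z.re) * s) := by
        refine norm_integral_le_of_norm_le ((integrableOn_exp_mul_Ioi hdecay 0).const_mul C) <|
          ae_restrict_of_forall_mem measurableSet_Ioi fun s hs => ?_
        have hnorm : ‖Complex.exp (-(z * s))‖ = Real.exp (-(z.re * s)) := by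
          simp [Complex.norm_exp]
        calc ‖Complex.exp (-(z * s)) • g s‖ ≤ Real.exp (-(z.re * s)) * (C * Real.exp (σ * s)) := by
              rw [norm_smul, hnorm]
              exact mul_le_mul_of_nonneg_left (hg s hs) (by positivity)
          _ = C * Real.exp ((σ - z.re) * s) := by
              rw [mul_left_comm, ← Real.exp_add]
              ring_nf
    _ = C / (z.re - σ) := by
        rw [integral_const_mul, integral_exp_mul_Ioi hdecay, mul_zero, Real.exp_zero, neg_div,
          ← div_neg, neg_sub, mul_one_div]

theorem ContinuousLinearMap.opNorm_le_of_eq_integral_exp_smul {B : Type*} [NormedAddCommGroup B]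
    [NormedSpace ℂ B] {T : ℝ → B →L[ℂ] B} {L : B →L[ℂ] B} {C σ : ℝ} {z : ℂ} (hC : 0 ≤ C)
    (hz : σ < z.re) (hT : ∀ s > 0, ‖T s‖ ≤ C * Real.exp (σ * s))
    (hL : ∀ f, L f = ∫ s in Ioi (0:ℝ), Complex.exp (-(z * s)) • T s f) :
    ‖L‖ ≤ C / (z.re - σ) := by
  refine L.opNorm_le_bound (div_nonneg hC (sub_pos.2 hz).le) fun f => ?_
  rw [hL f, div_mul_eq_mul_div]
  refine norm_integral_exp_smul_le hz fun s hs => ?_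
  calc ‖T s f‖ ≤ C * Real.exp (σ * s) * ‖f‖ :=
        (T s).le_of_opNorm_le (hT s hs) f
    _ = C * ‖f‖ * Real.exp (σ * s) := by ring

theorem mul_exp_sub_div_sub_lt {a c m t σ : ℝ} (ha : 0 < a) (ht : 0 < t) (hσ : 0 ≤ σ)
    (hσm : σ * t ≤ m) (hmc : Real.exp m < c) (hmr : m < a * (1 - 1 / c) * t) :
    a * Real.exp (m - σ * t) / (a - σ) < c := by
  have hc : 0 < c := (Real.exp_pos m).trans hmc
  set β := m / t
  have hβt : β * t = m := div_mul_cancel₀ m ht.ne'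
  have hβ : β < a * (1 - 1 / c) := (div_lt_iff₀ ht).2 hmr
  have hσβ : σ ≤ β := (le_div_iff₀ ht).2 hσm
  have hβa : β < a := hβ.trans_le (mul_le_of_le_one_right ha.le (by simp [hc.le]))
  have hσa : σ < a := hσβ.trans_lt hβa
  -- in the variable `y = a - σ ∈ [a - β, a]` the claim is `t y - log y < const`
  have hφ : ConvexOn ℝ (Ioi 0) (fun y : ℝ => t * y - Real.log y) :=
    ((LinearMap.mulLeft ℝ t).convexOn (convex_Ioi 0)).sub strictConcaveOn_log_Ioi.concaveOn
  have hmax := hφ.le_max_of_mem_Icc (sub_pos.2 hβa) ha (z := a - σ) ⟨by linarith, by linarith⟩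
  have hend_β : Real.log a < Real.log c + Real.log (a - β) := by
    rw [← Real.log_mul hc.ne' (sub_pos.2 hβa).ne']
    refine Real.log_lt_log ha ?_
    have : c * (a - β) - a = c * (a * (1 - 1 / c) - β) := by field_simp; ring
    nlinarith [mul_pos hc (sub_pos.2 hβ)]
  have hend_zero : m < Real.log c := (Real.lt_log_iff_exp_lt hc).2 hmc
  rw [div_lt_iff₀ (sub_pos.2 hσa), ← Real.log_lt_log_iff (by positivity) (by positivity),
    Real.log_mul ha.ne' (Real.exp_pos _).ne', Real.log_exp, Real.log_mul hc.ne' (sub_pos.2 hσa).ne']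
  rcases le_max_iff.1 hmax with hy | hy <;> linarith

theorem stmt_6_general
    {B : Type*} [NormedAddCommGroup B] [NormedSpace ℂ B]
    (T : ℝ → (B →L[ℂ] B))
    (hT0 : ‖T 0‖ = 1)
    (hω₀ : Filter.limsup (fun t : ℝ => ((Real.log ‖T t‖ / t : ℝ) : EReal)) Filter.atTop = 0)
    (ν : ℝ → ℝ)
    (hν_concave : ConcaveOn ℝ (Set.Ici (0:ℝ)) ν)
    (hν_ge : ∀ t : ℝ, 0 ≤ t → Real.log ‖T t‖ ≤ ν t)
    (R : ℂ → (B →L[ℂ] B))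
    (hR : ∀ z : ℂ, 0 < z.re → ∀ f : B,
      R z f = ∫ s in Set.Ioi (0:ℝ), Complex.exp (-(z * s)) • T s f) :
    ∀ t : ℝ, 0 ≤ t → ∀ a : ℝ, 0 < a → ∀ ca ra : ℝ,
      ca = a * sSup (Set.range fun b : ℝ => ‖R (a + b * Complex.I)‖) →
      ra = a * (1 - 1/ca) → 1 ≤ ca →
      min (Real.exp (ra * t)) ca ≤ Real.exp (ν t) := by
  intro t ht a ha ca ra hca hra hca1
  have hν0 : 0 ≤ ν 0 := by simpa [hT0] using hν_ge 0 le_rfl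
  rcases ht.eq_or_lt with rfl | ht
  · simpa using min_le_of_left_le (Real.one_le_exp hν0)
  set σ := derivWithin ν (Ioi t) t
  have htangent : ∀ u, 0 ≤ u → ν u ≤ ν t + σ * (u - t) := fun u hu =>
    hν_concave.le_add_rightDeriv_mul_sub (by simpa using ht) hu
  have hσ0 : 0 ≤ σ := by
    have := limsup_div_le_of_le_affine (f := fun u => Real.log ‖T u‖) (A := ν t - σ * t) <|
      (eventually_ge_atTop 0).mono fun u hu => by linarith [hν_ge u hu, htangent u hu]
    exact_mod_cast hω₀ ▸ this
  have hσt : σ * t ≤ ν t := by linarith [htangent 0 le_rfl]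
  by_contra! hlt
  rw [lt_min_iff, Real.exp_lt_exp, hra] at hlt
  have hσa : σ < a := by
    have : 0 ≤ a * (1 / ca) * t := by positivity
    nlinarith
  have hT : ∀ s > 0, ‖T s‖ ≤ Real.exp (ν t - σ * t) * Real.exp (σ * s) := fun s hs => by
    rw [← Real.exp_add]
    refine (Real.le_exp_log _).trans (Real.exp_le_exp.2 ?_)
    linarith [hν_ge s hs.le, htangent s hs.le]
  have hca_le : ca ≤ a * Real.exp (ν t - σ * t) / (a - σ) := by
    rw [hca, mul_div_assoc]
    refine mul_le_mul_of_nonneg_left (csSup_le (range_nonempty _) ?_) ha.le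
    rintro _ ⟨b, rfl⟩
    simpa using (R (a + b * Complex.I)).opNorm_le_of_eq_integral_exp_smul (Real.exp_pos _).le
      (by simpa using hσa) hT (hR _ (by simpa using ha))
  exact (hca_le.trans_lt (mul_exp_sub_div_sub_lt ha ht hσ0 hσt hlt.2 hlt.1)).false

/-- Suppose that for every `a > 0` the quantity
`c(a) := a ⨆ b, ‖R_{a+ib}‖` is finite (the supremum is bounded).  Then for every
`t ≥ 0`, `N t ≥ min (e^{r(a) t}) (c(a))` for every `a > 0` with `c(a) ≥ 1`, where
`r(a) = a (1 − 1/c(a))`; i.e. `N t` dominates the supremum of these quantities.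
Here `N = exp ν` is the upper log-concave envelope of `t ↦ ‖T t‖` and `ω₀ = 0`. -/
theorem stmt_6
    {B : Type*} [NormedAddCommGroup B] [NormedSpace ℂ B] [CompleteSpace B]
    (T : ℝ → (B →L[ℂ] B))
    (hT0 : ‖T 0‖ = 1)
    (hcont : ∀ f : B, ContinuousOn (fun t => T t f) (Set.Ici (0:ℝ)))
    (Mb ωb : ℝ) (hbound : ∀ t : ℝ, 0 ≤ t → ‖T t‖ ≤ Mb * Real.exp (ωb * t))
    (hω₀ : Filter.limsup (fun t : ℝ => ((Real.log ‖T t‖ / t : ℝ) : EReal)) Filter.atTop = 0)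
    (ν : ℝ → ℝ)
    (hν_concave : ConcaveOn ℝ (Set.Ici (0:ℝ)) ν)
    (hν_ge : ∀ t : ℝ, 0 ≤ t → Real.log ‖T t‖ ≤ ν t)
    (hν_min : ∀ κ : ℝ → ℝ, ConcaveOn ℝ (Set.Ici (0:ℝ)) κ →
        (∀ t : ℝ, 0 ≤ t → Real.log ‖T t‖ ≤ κ t) → ∀ t : ℝ, 0 ≤ t → ν t ≤ κ t)
    (R : ℂ → (B →L[ℂ] B))
    (hRint : ∀ z : ℂ, 0 < z.re → ∀ f : B,
      MeasureTheory.IntegrableOn (fun s : ℝ => Complex.exp (-(z * s)) • T s f) (Set.Ioi 0))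
    (hR : ∀ z : ℂ, 0 < z.re → ∀ f : B,
      R z f = ∫ s in Set.Ioi (0:ℝ), Complex.exp (-(z * s)) • T s f)
    (hBdd : ∀ a : ℝ, 0 < a →
      BddAbove (Set.range fun b : ℝ => ‖R (a + b * Complex.I)‖)) :
    ∀ t : ℝ, 0 ≤ t → ∀ a : ℝ, 0 < a → ∀ ca ra : ℝ,
      ca = a * sSup (Set.range fun b : ℝ => ‖R (a + b * Complex.I)‖) →
      ra = a * (1 - 1/ca) → 1 ≤ ca →
      min (Real.exp (ra * t)) ca ≤ Real.exp (ν t) :=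
  stmt_6_general T hT0 hω₀ ν hν_concave hν_ge R hR
end

section
/- Suppose a > 0 and c := a · sup{‖R_{a+ib}‖ : b ∈ ℝ} satisfies 0 < c < 1. Then there exists a function F from the open half-plane Ω = {w ∈ ℂ : Re(w) > a(1 − 1/c)} into the bounded linear operators on B which is analytic on Ω, agrees with R_w for all w with Re(w) > 0, and satisfies ‖F(w)‖ ≤ c / (a − c(a − Re(w))) for all w ∈ Ω with Re(w) ≤ a. (Note a(1 − 1/c) < 0, so the resolvent extends analytically with uniform bounds across the imaginary axis; hence the pseudospectral abscissa s₀ is negative.) -/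
/-!
The semigroup law turns `R_z R_w f` into the integral of `e^{-zt-ws} T_{t+s} f` over the
quadrant; after the shear `(t, s) ↦ (t, t + s)` and Fubini, integrating along the diagonals
`t + s = u` gives the resolvent identity `R_z - R_w = (w - z) R_z R_w`.

For such a pseudo-resolvent the Neumann series `R_z (1 - (z - w) R_z)⁻¹` around a centre `z`
agrees with `R_w`, and two expansions agree wherever both converge, because the resolvent
identity forces all the `R_z` to commute. The expansions therefore glue to a holomorphic
extension. Centred at `a + i Im w`, where `‖R‖ ≤ c / a`, the expansion converges for
`a - Re w < a / c`, with the norm bound `(c / a) / (1 - (a - Re w) c / a)`.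
-/

open MeasureTheory Filter Set

section PseudoResolvent

variable {A : Type*} [NormedRing A] [NormedAlgebra ℂ A]

def IsPseudoResolvent (R : ℂ → A) (U : Set ℂ) : Prop :=
  ∀ z ∈ U, ∀ w ∈ U, R z - R w = (w - z) • (R z * R w)

noncomputable def neumannResolvent (R : ℂ → A) (z w : ℂ) : A :=
  R z * Ring.inverse (1 - (z - w) • R z)

open Classical in
noncomputable def resolventExtension (R : ℂ → A) (U : Set ℂ) (w : ℂ) : A :=
  if h : ∃ z ∈ U, ‖(z - w) • R z‖ < 1 then neumannResolvent R h.choose w else 0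

variable {R : ℂ → A} {U : Set ℂ}

@[simp]
lemma neumannResolvent_self (w : ℂ) : neumannResolvent R w w = R w := by
  simp [neumannResolvent]

lemma IsPseudoResolvent.commute (hR : IsPseudoResolvent R U) {z w : ℂ} (hz : z ∈ U)
    (hw : w ∈ U) : Commute (R z) (R w) := by
  rcases eq_or_ne z w with rfl | hne
  · exact Commute.refl _
  refine smul_right_injective A (sub_ne_zero.mpr hne.symm) ?_
  show (w - z) • (R z * R w) = (w - z) • (R w * R z)
  rw [← hR z hz w hw, ← neg_sub, hR w hw z hz, ← neg_smul, neg_sub]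

lemma norm_sub_smul_le {z w : ℂ} {M : ℝ} (hM : ‖R z‖ ≤ M) :
    ‖(z - w) • R z‖ ≤ ‖z - w‖ * M :=
  (norm_smul_le _ _).trans (mul_le_mul_of_nonneg_left hM (norm_nonneg _))

variable [CompleteSpace A]

lemma IsPseudoResolvent.neumannResolvent_eq (hR : IsPseudoResolvent R U) {z z' w : ℂ}
    (hz : z ∈ U) (hz' : z' ∈ U) (h : ‖(z - w) • R z‖ < 1) (h' : ‖(z' - w) • R z'‖ < 1) :
    neumannResolvent R z w = neumannResolvent R z' w := by
  set u := Units.oneSub _ h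
  set u' := Units.oneSub _ h'
  have hcomm := hR.commute hz hz'
  have hcross : R z * u' = R z' * u := by
    simp only [u, u', Units.val_oneSub, mul_sub, mul_one, mul_smul_comm, ← hcomm.eq]
    rw [sub_eq_sub_iff_sub_eq_sub, hR z hz z' hz', ← sub_smul]
    congr 1
    ring
  have hu : Commute (u : A) u' :=
    (Commute.one_left _).sub_left ((Commute.one_right _).sub_right
      ((hcomm.smul_left _).smul_right _))
  rw [neumannResolvent, neumannResolvent, NormedRing.inverse_one_sub _ h,
    NormedRing.inverse_one_sub _ h']
  calc R z * ↑u⁻¹ = R z * u' * ↑u'⁻¹ * ↑u⁻¹ := by simp [mul_assoc]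
    _ = R z' * ↑u'⁻¹ * (u * ↑u⁻¹) := by
      rw [hcross, mul_assoc (R z'), hu.units_inv_right.eq]; simp only [mul_assoc]
    _ = R z' * ↑u'⁻¹ := by simp

lemma IsPseudoResolvent.resolventExtension_eq (hR : IsPseudoResolvent R U) {z w : ℂ}
    (hz : z ∈ U) (h : ‖(z - w) • R z‖ < 1) :
    resolventExtension R U w = neumannResolvent R z w := by
  have hex : ∃ z ∈ U, ‖(z - w) • R z‖ < 1 := ⟨z, hz, h⟩
  rw [resolventExtension, dif_pos hex]
  exact hR.neumannResolvent_eq hex.choose_spec.1 hz hex.choose_spec.2 h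

lemma IsPseudoResolvent.resolventExtension_eq_self (hR : IsPseudoResolvent R U) {w : ℂ}
    (hw : w ∈ U) : resolventExtension R U w = R w := by
  rw [hR.resolventExtension_eq hw (by simp), neumannResolvent_self]

lemma differentiableAt_neumannResolvent {z w : ℂ} (h : ‖(z - w) • R z‖ < 1) :
    DifferentiableAt ℂ (neumannResolvent R z) w :=
  ((differentiableAt_inverse (isUnit_one_sub_of_norm_lt_one h)).comp w
    ((differentiableAt_const _).sub
      (((differentiableAt_const z).sub differentiableAt_id).smul_const (R z)))).const_mul (R z)

lemma IsPseudoResolvent.differentiableOn_resolventExtension (hR : IsPseudoResolvent R U) :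
    DifferentiableOn ℂ (resolventExtension R U) {w | ∃ z ∈ U, ‖(z - w) • R z‖ < 1} := by
  rintro w ⟨z, hz, h⟩
  have hnhds : {w' : ℂ | ‖(z - w') • R z‖ < 1} ∈ nhds w :=
    (isOpen_lt (by fun_prop) continuous_const).mem_nhds h
  refine ((differentiableAt_neumannResolvent h).congr_of_eventuallyEq ?_).differentiableWithinAt
  filter_upwards [hnhds] with w' h' using hR.resolventExtension_eq hz h'

lemma norm_neumannResolvent_le (h1 : ‖(1 : A)‖ ≤ 1) {z w : ℂ} {M : ℝ} (hM : ‖R z‖ ≤ M)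
    (h : ‖z - w‖ * M < 1) : ‖neumannResolvent R z w‖ ≤ M / (1 - ‖z - w‖ * M) := by
  have hsmall : ‖(z - w) • R z‖ ≤ ‖z - w‖ * M := norm_sub_smul_le hM
  have hinv : ‖Ring.inverse (1 - (z - w) • R z)‖ ≤ (1 - ‖z - w‖ * M)⁻¹ := by
    rw [← geom_series_eq_inverse _ (hsmall.trans_lt h)]
    refine (tsum_geometric_le_of_norm_lt_one _ (hsmall.trans_lt h)).trans ?_
    have := inv_anti₀ (sub_pos.mpr h) (sub_le_sub_left hsmall 1)
    linarith
  calc ‖neumannResolvent R z w‖ ≤ M * (1 - ‖z - w‖ * M)⁻¹ :=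
        (norm_mul_le _ _).trans
          (mul_le_mul hM hinv (norm_nonneg _) ((norm_nonneg _).trans hM))
    _ = M / (1 - ‖z - w‖ * M) := (div_eq_mul_inv _ _).symm

end PseudoResolvent

lemma setIntegral_Ioi_prod_Ioi_eq_integral_Ioi_intervalIntegral {F : Type*}
    [NormedAddCommGroup F] [NormedSpace ℝ F] {g : ℝ × ℝ → F}
    (hg : IntegrableOn g (Ioi 0 ×ˢ Ioi 0)) :
    ∫ p in Ioi 0 ×ˢ Ioi 0, g p = ∫ u in Ioi 0, ∫ t in (0)..u, g (t, u - t) := by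
  have hshear := (measurePreserving_prod_add (volume : Measure ℝ) volume).symm
    (MeasurableEquiv.shearAddRight ℝ)
  have hsymm (p : ℝ × ℝ) : (MeasurableEquiv.shearAddRight ℝ).symm p = (p.1, -p.1 + p.2) := rfl
  have hQ : MeasurableSet (Ioi (0 : ℝ) ×ˢ Ioi (0 : ℝ)) := measurableSet_Ioi.prod measurableSet_Ioi
  rw [← integral_indicator hQ, Measure.volume_eq_prod, ← hshear.integral_comp',
    integral_prod_symm, ← integral_indicator measurableSet_Ioi]
  · congr 1 with u
    by_cases hu : 0 < u
    · rw [indicator_of_mem (mem_Ioi.mpr hu), intervalIntegral.integral_of_le hu.le,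
        integral_Ioc_eq_integral_Ioo, ← integral_indicator measurableSet_Ioo]
      congr 1 with t
      simp [indicator, hsymm, sub_eq_neg_add]
    · rw [indicator_of_notMem (by simpa using hu)]
      refine integral_eq_zero_of_ae (Eventually.of_forall fun t => ?_)
      refine indicator_of_notMem ?_ g
      rw [hsymm, mem_prod, mem_Ioi, mem_Ioi]
      intro h
      linarith [h.1, h.2]
  · exact (hshear.integrable_comp_emb (MeasurableEquiv.measurableEmbedding _)).mpr
      ((integrable_indicator_iff hQ).mpr hg)

section Laplace

variable {E : Type*} [NormedAddCommGroup E] [NormedSpace ℂ E]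

lemma norm_cexp_neg_mul_smul (z : ℂ) (t : ℝ) (v : E) :
    ‖Complex.exp (-(z * t)) • v‖ = Real.exp (-z.re * t) * ‖v‖ := by
  rw [norm_smul, Complex.norm_exp]; simp

lemma integrableOn_cexp_neg_mul_smul {φ : ℝ → E} (hφ : ContinuousOn φ (Ici 0)) {D : ℝ}
    (hD : ∀ u, 0 ≤ u → ‖φ u‖ ≤ D) {z : ℂ} (hz : 0 < z.re) :
    IntegrableOn (fun u : ℝ => Complex.exp (-(z * u)) • φ u) (Ioi 0) := by
  refine Integrable.mono' ((exp_neg_integrableOn_Ioi 0 hz).mul_const D) ?_ ?_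
  · exact ((by fun_prop : Continuous fun u : ℝ => Complex.exp (-(z * u))).continuousOn.smul
      (hφ.mono Ioi_subset_Ici_self)).aestronglyMeasurable measurableSet_Ioi
  · filter_upwards [self_mem_ae_restrict measurableSet_Ioi] with u hu
    rw [norm_cexp_neg_mul_smul]
    exact mul_le_mul_of_nonneg_left (hD u (le_of_lt hu)) (Real.exp_pos _).le

lemma integrableOn_Ioi_prod_Ioi_cexp_smul_comp_add {φ : ℝ → E} (hφ : ContinuousOn φ (Ici 0))
    {D : ℝ} (hD : ∀ u, 0 ≤ u → ‖φ u‖ ≤ D) {z w : ℂ} (hz : 0 < z.re) (hw : 0 < w.re) :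
    IntegrableOn (fun p : ℝ × ℝ => (Complex.exp (-(z * p.1)) * Complex.exp (-(w * p.2))) •
      φ (p.1 + p.2)) (Ioi 0 ×ˢ Ioi 0) := by
  have hQ : MeasurableSet (Ioi (0 : ℝ) ×ˢ Ioi (0 : ℝ)) := measurableSet_Ioi.prod measurableSet_Ioi
  have hmajor : IntegrableOn (fun p : ℝ × ℝ => Real.exp (-z.re * p.1) * Real.exp (-w.re * p.2))
      (Ioi 0 ×ˢ Ioi 0) := by
    rw [IntegrableOn, Measure.volume_eq_prod, ← Measure.prod_restrict]
    exact (exp_neg_integrableOn_Ioi 0 hz).mul_prod (exp_neg_integrableOn_Ioi 0 hw)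
  refine Integrable.mono' (hmajor.mul_const D) ?_ ?_
  · refine ContinuousOn.aestronglyMeasurable ?_ hQ
    refine ContinuousOn.smul (by fun_prop) (hφ.comp (by fun_prop) ?_)
    rintro p ⟨h1, h2⟩
    exact mem_Ici.mpr (add_pos h1 h2).le
  · filter_upwards [self_mem_ae_restrict hQ] with p ⟨h1, h2⟩
    rw [mul_smul, norm_cexp_neg_mul_smul, norm_cexp_neg_mul_smul, mul_assoc]
    gcongr
    exact hD _ (add_pos h1 h2).le

noncomputable def laplaceTransform (φ : ℝ → E) (z : ℂ) : E :=
  ∫ u in Ioi (0 : ℝ), Complex.exp (-(z * u)) • φ u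

variable [CompleteSpace E]

lemma laplaceTransform_laplaceTransform_comp_add {φ : ℝ → E} (hφ : ContinuousOn φ (Ici 0))
    {D : ℝ} (hD : ∀ u, 0 ≤ u → ‖φ u‖ ≤ D) {z w : ℂ} (hz : 0 < z.re) (hw : 0 < w.re)
    (hzw : z ≠ w) :
    laplaceTransform (fun t => laplaceTransform (fun s => φ (t + s)) w) z =
      (w - z)⁻¹ • (laplaceTransform φ z - laplaceTransform φ w) := by
  have hwz : w - z ≠ 0 := sub_ne_zero.mpr hzw.symm
  have hkernel (u t : ℝ) :
      (Complex.exp (-(z * t)) * Complex.exp (-(w * ↑(u - t)))) • φ (t + (u - t)) =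
        Complex.exp ((w - z) * t) • Complex.exp (-(w * u)) • φ u := by
    rw [add_sub_cancel, smul_smul, ← Complex.exp_add, ← Complex.exp_add]
    push_cast; ring_nf
  have hint := integrableOn_Ioi_prod_Ioi_cexp_smul_comp_add hφ hD hz hw
  calc laplaceTransform (fun t => laplaceTransform (fun s => φ (t + s)) w) z
      = ∫ p in Ioi (0 : ℝ) ×ˢ Ioi (0 : ℝ),
          (Complex.exp (-(z * p.1)) * Complex.exp (-(w * p.2))) • φ (p.1 + p.2) := by
        rw [Measure.volume_eq_prod, setIntegral_prod _ hint]
        simp only [laplaceTransform, mul_smul, integral_smul]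
    _ = ∫ u in Ioi (0 : ℝ),
          ((Complex.exp ((w - z) * u) - 1) / (w - z)) • Complex.exp (-(w * u)) • φ u := by
        rw [setIntegral_Ioi_prod_Ioi_eq_integral_Ioi_intervalIntegral hint]
        simp only [hkernel, intervalIntegral.integral_smul_const, integral_exp_mul_complex hwz]
        simp
    _ = ∫ u in Ioi (0 : ℝ),
          (w - z)⁻¹ • (Complex.exp (-(z * u)) • φ u - Complex.exp (-(w * u)) • φ u) := by
        congr 1 with u
        rw [smul_sub, smul_smul, smul_smul, smul_smul, ← sub_smul]
        congr 1
        rw [show -(z * (u : ℂ)) = (w - z) * u + -(w * u) by ring, Complex.exp_add]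
        field_simp
    _ = _ := by
        rw [integral_smul, integral_sub (integrableOn_cexp_neg_mul_smul hφ hD hz)
          (integrableOn_cexp_neg_mul_smul hφ hD hw)]
        rfl

end Laplace

lemma isPseudoResolvent_of_laplaceTransform {B : Type*} [NormedAddCommGroup B]
    [NormedSpace ℂ B] [CompleteSpace B] (T : ℝ → (B →L[ℂ] B))
    (hsemi : ∀ s : ℝ, 0 ≤ s → ∀ t : ℝ, 0 ≤ t → T (s + t) = (T s).comp (T t))
    (hcont : ∀ f : B, ContinuousOn (fun t => T t f) (Ici 0))
    (Mb : ℝ) (hbound : ∀ t : ℝ, 0 ≤ t → ‖T t‖ ≤ Mb) (R : ℂ → (B →L[ℂ] B))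
    (hR : ∀ z : ℂ, 0 < z.re → ∀ f : B, R z f = laplaceTransform (fun s => T s f) z) :
    IsPseudoResolvent R {z | 0 < z.re} := by
  intro z hz w hw
  rcases eq_or_ne z w with rfl | hzw
  · simp
  ext f
  have hD (u : ℝ) (hu : 0 ≤ u) : ‖T u f‖ ≤ Mb * ‖f‖ := (T u).le_of_opNorm_le (hbound u hu) f
  have hTR (t : ℝ) (ht : 0 ≤ t) :
      T t (R w f) = laplaceTransform (fun s => T (t + s) f) w := by
    rw [hR w hw, laplaceTransform, ← (T t).integral_comp_comm
      (integrableOn_cexp_neg_mul_smul (hcont f) hD hw)]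
    refine setIntegral_congr_fun measurableSet_Ioi fun s hs => ?_
    simp [hsemi t ht s (le_of_lt hs)]
  have hRR : R z (R w f) =
      laplaceTransform (fun t => laplaceTransform (fun s => T (t + s) f) w) z := by
    rw [hR z hz]
    exact setIntegral_congr_fun measurableSet_Ioi fun t ht => by
      simp only [hTR t (le_of_lt ht)]
  have hwz : w - z ≠ 0 := sub_ne_zero.mpr hzw.symm
  change R z f - R w f = (w - z) • R z (R w f)
  rw [hRR, laplaceTransform_laplaceTransform_comp_add (hcont f) hD hz hw hzw,
    smul_inv_smul₀ hwz, hR z hz, hR w hw]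

lemma norm_ofReal_add_im_mul_I_sub (a : ℝ) (w : ℂ) :
    ‖(a + w.im * Complex.I) - w‖ = |a - w.re| := by
  rw [show (a + w.im * Complex.I) - w = ((a - w.re : ℝ) : ℂ) by apply Complex.ext <;> simp,
    Complex.norm_real, Real.norm_eq_abs]

theorem stmt_7_general
    {B : Type*} [NormedAddCommGroup B] [NormedSpace ℂ B] [CompleteSpace B]
    (T : ℝ → (B →L[ℂ] B))
    (hsemi : ∀ s : ℝ, 0 ≤ s → ∀ t : ℝ, 0 ≤ t → T (s + t) = (T s).comp (T t))
    (hcont : ∀ f : B, ContinuousOn (fun t => T t f) (Set.Ici (0:ℝ)))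
    (Mb : ℝ) (hbound : ∀ t : ℝ, 0 ≤ t → ‖T t‖ ≤ Mb)
    (R : ℂ → (B →L[ℂ] B))
    (hR : ∀ z : ℂ, 0 < z.re → ∀ f : B,
      R z f = ∫ s in Set.Ioi (0:ℝ), Complex.exp (-(z * s)) • T s f)
    (a : ℝ) (ha : 0 < a)
    (hBdd : BddAbove (Set.range fun b : ℝ => ‖R (a + b * Complex.I)‖))
    (c : ℝ) (hc : c = a * sSup (Set.range fun b : ℝ => ‖R (a + b * Complex.I)‖))
    (hc0 : 0 < c) :
    ∃ F : ℂ → (B →L[ℂ] B),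
      DifferentiableOn ℂ F {w : ℂ | a * (1 - 1/c) < w.re} ∧
      (∀ w : ℂ, 0 < w.re → F w = R w) ∧
      (∀ w : ℂ, a * (1 - 1/c) < w.re → w.re ≤ a →
        ‖F w‖ ≤ c / (a - c * (a - w.re))) := by
  have hres := isPseudoResolvent_of_laplaceTransform T hsemi hcont Mb hbound R hR
  have hM (b : ℝ) : ‖R (a + b * Complex.I)‖ ≤ c / a := by
    rw [hc, mul_div_cancel_left₀ _ ha.ne']
    exact le_csSup hBdd ⟨b, rfl⟩
  have hsmall (w : ℂ) (h1 : a * (1 - 1/c) < w.re) (h2 : w.re ≤ a) :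
      ‖(a + w.im * Complex.I) - w‖ * (c / a) < 1 := by
    rw [norm_ofReal_add_im_mul_I_sub, abs_of_nonneg (sub_nonneg.mpr h2), mul_div_assoc',
      div_lt_one ha]
    rw [mul_sub, mul_one, mul_one_div] at h1
    linarith [(lt_div_iff₀ hc0).mp (show a - w.re < a / c by linarith)]
  have hcentre (w : ℂ) : a + w.im * Complex.I ∈ {z : ℂ | 0 < z.re} := by simp [ha]
  refine ⟨resolventExtension R {z | 0 < z.re}, hres.differentiableOn_resolventExtension.mono ?_,
    fun w hw => hres.resolventExtension_eq_self hw, fun w h1 h2 => ?_⟩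
  · intro w hw
    by_cases hpos : 0 < w.re
    · exact ⟨w, hpos, by simp⟩
    · exact ⟨_, hcentre w, (norm_sub_smul_le (hM _)).trans_lt (hsmall w hw (by linarith))⟩
  · rw [hres.resolventExtension_eq (hcentre w)
      ((norm_sub_smul_le (hM _)).trans_lt (hsmall w h1 h2))]
    refine (norm_neumannResolvent_le ContinuousLinearMap.norm_id_le (hM _)
      (hsmall w h1 h2)).trans_eq ?_
    rw [norm_ofReal_add_im_mul_I_sub, abs_of_nonneg (sub_nonneg.mpr h2)]
    field_simp

/-- Suppose `a > 0` and `c := a ⨆_b ‖R_{a+ib}‖` satisfies `0 < c < 1`,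
for a uniformly bounded one-parameter semigroup `T` with Laplace-transform resolvents `R`.
Then the resolvent extends analytically to the half-plane `{w : Re w > a(1 − 1/c)}` with
`‖F w‖ ≤ c / (a − c (a − Re w))` for `Re w ≤ a` there. -/
theorem stmt_7
    {B : Type*} [NormedAddCommGroup B] [NormedSpace ℂ B] [CompleteSpace B]
    (T : ℝ → (B →L[ℂ] B))
    (hT0 : T 0 = 1)
    (hsemi : ∀ s : ℝ, 0 ≤ s → ∀ t : ℝ, 0 ≤ t → T (s + t) = (T s).comp (T t))
    (hcont : ∀ f : B, ContinuousOn (fun t => T t f) (Set.Ici (0:ℝ)))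
    (Mb : ℝ) (hbound : ∀ t : ℝ, 0 ≤ t → ‖T t‖ ≤ Mb)
    (R : ℂ → (B →L[ℂ] B))
    (hRint : ∀ z : ℂ, 0 < z.re → ∀ f : B,
      MeasureTheory.IntegrableOn (fun s : ℝ => Complex.exp (-(z * s)) • T s f) (Set.Ioi 0))
    (hR : ∀ z : ℂ, 0 < z.re → ∀ f : B,
      R z f = ∫ s in Set.Ioi (0:ℝ), Complex.exp (-(z * s)) • T s f)
    (a : ℝ) (ha : 0 < a)
    (hBdd : BddAbove (Set.range fun b : ℝ => ‖R (a + b * Complex.I)‖))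
    (c : ℝ) (hc : c = a * sSup (Set.range fun b : ℝ => ‖R (a + b * Complex.I)‖))
    (hc0 : 0 < c) (hc1 : c < 1) :
    ∃ F : ℂ → (B →L[ℂ] B),
      DifferentiableOn ℂ F {w : ℂ | a * (1 - 1/c) < w.re} ∧
      (∀ w : ℂ, 0 < w.re → F w = R w) ∧
      (∀ w : ℂ, a * (1 - 1/c) < w.re → w.re ≤ a →
        ‖F w‖ ≤ c / (a - c * (a - w.re))) :=
  stmt_7_general T hsemi hcont Mb hbound R hR a ha hBdd c hc hc0
end

section
/- Let c > 0 and 0 < γ < 1, set a(x) = exp(c x^{1−γ}) for x ≥ 0, and define T_t on L²(0,∞) by (T_t f)(x) = (a(x+t)/a(x)) f(x+t). Then ‖T_t‖ = exp(c t^{1−γ}) for every t ≥ 0, and the function t ↦ exp(c t^{1−γ}) is log-concave, so it equals its own upper log-concave envelope N(t). -/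
/-!
For `t ≥ 0`, `T t` is a weighted shift with weight
`w x = a (x + t) / a x = exp (c ((x + t)^β - x^β))`, `β = 1 - γ`. The shift `f ↦ f (· + t)` is a
contraction of `Lᵖ(0, ∞)`, so `‖T t‖ ≤ sup w`, and subadditivity of `x ↦ x^β` gives
`w ≤ exp (c t^β)`. Conversely, indicators of the short intervals `(t, t + ε)` are moved
isometrically onto `(0, ε)`, so `‖T t‖ ≥ lim_{x → 0+} w x = exp (c t^β)`. Finally `t ↦ c t^β` is
concave, hence equal to its own least concave majorant.
-/

open MeasureTheory Set Filter Topology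
open scoped ENNReal

theorem measurePreserving_add_right_restrict_Ioi (t : ℝ) :
    MeasurePreserving (· + t) (volume.restrict (Ioi 0)) (volume.restrict (Ioi t)) := by
  simpa using (measurePreserving_add_right volume t).restrict_preimage (measurableSet_Ioi (a := t))

theorem ae_eq_comp_add_right_restrict_Ioi {α : Type*} {f g : ℝ → α} {t : ℝ} (ht : 0 ≤ t)
    (hfg : f =ᵐ[volume.restrict (Ioi 0)] g) :
    (fun x => f (x + t)) =ᵐ[volume.restrict (Ioi 0)] fun x => g (x + t) :=
  (measurePreserving_add_right_restrict_Ioi t).quasiMeasurePreserving.ae_eq_comp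
    (ae_restrict_of_ae_restrict_of_subset (Ioi_subset_Ioi ht) hfg)

variable {E : Type*} [NormedAddCommGroup E] {p : ℝ≥0∞}

theorem eLpNorm_comp_add_right_restrict_Ioi (f : ℝ → E) (t : ℝ) :
    eLpNorm (fun x => f (x + t)) p (volume.restrict (Ioi 0)) =
      eLpNorm f p (volume.restrict (Ioi t)) := by
  rw [← (measurePreserving_add_right_restrict_Ioi t).map_eq,
    (measurableEmbedding_addRight t).eLpNorm_map_measure]
  rfl

theorem eLpNorm_comp_add_right_restrict_Ioi_le (f : ℝ → E) {t : ℝ} (ht : 0 ≤ t) :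
    eLpNorm (fun x => f (x + t)) p (volume.restrict (Ioi 0)) ≤
      eLpNorm f p (volume.restrict (Ioi 0)) := by
  rw [eLpNorm_comp_add_right_restrict_Ioi]
  exact eLpNorm_mono_measure f (Measure.restrict_mono (Ioi_subset_Ioi ht) le_rfl)

theorem eLpNorm_comp_add_right_restrict_Ioi_of_support_subset {f : ℝ → E} {t : ℝ} (ht : 0 ≤ t)
    (hf : f.support ⊆ Ioi t) :
    eLpNorm (fun x => f (x + t)) p (volume.restrict (Ioi 0)) =
      eLpNorm f p (volume.restrict (Ioi 0)) := by
  rw [eLpNorm_comp_add_right_restrict_Ioi, eLpNorm_restrict_eq_of_support_subset hf,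
    eLpNorm_restrict_eq_of_support_subset (hf.trans (Ioi_subset_Ioi ht))]

section WeightedShift

variable [Fact (1 ≤ p)]
  {S : Lp ℂ p (volume.restrict (Ioi (0 : ℝ))) →L[ℂ] Lp ℂ p (volume.restrict (Ioi (0 : ℝ)))}
  {w : ℝ → ℝ} {t : ℝ}

theorem opNorm_le_of_abs_weight_le
    (hS : ∀ f, S f =ᵐ[volume.restrict (Ioi 0)] fun x => (w x : ℂ) * f (x + t)) (ht : 0 ≤ t)
    {M : ℝ} (hM : 0 ≤ M) (hw : ∀ x, 0 < x → |w x| ≤ M) : ‖S‖ ≤ M := by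
  refine S.opNorm_le_bound hM fun f => ?_
  have hpointwise : ∀ᵐ x ∂volume.restrict (Ioi 0), ‖(w x : ℂ) * f (x + t)‖ ≤ M * ‖f (x + t)‖ := by
    filter_upwards [ae_restrict_mem measurableSet_Ioi] with x hx
    rw [norm_mul, Complex.norm_real, Real.norm_eq_abs]
    exact mul_le_mul_of_nonneg_right (hw x hx) (norm_nonneg _)
  have henorm : ‖S f‖ₑ ≤ ENNReal.ofReal M * ‖f‖ₑ := by
    rw [Lp.enorm_def, Lp.enorm_def, eLpNorm_congr_ae (hS f)]
    grw [eLpNorm_le_mul_eLpNorm_of_ae_le_mul hpointwise p,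
      eLpNorm_comp_add_right_restrict_Ioi_le _ ht]
  rwa [← ofReal_norm, ← ofReal_norm, ← ENNReal.ofReal_mul hM,
    ENNReal.ofReal_le_ofReal_iff (by positivity)] at henorm

theorem mul_norm_le_norm_apply_of_support_subset
    (hS : ∀ f, S f =ᵐ[volume.restrict (Ioi 0)] fun x => (w x : ℂ) * f (x + t)) (ht : 0 ≤ t)
    {φ : ℝ → ℂ} (hφ : MemLp φ p (volume.restrict (Ioi 0))) (hsupp : φ.support ⊆ Ioi t)
    {K : ℝ} (hK : 0 ≤ K) (hw : ∀ x, φ (x + t) ≠ 0 → K ≤ |w x|) :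
    K * ‖hφ.toLp φ‖ ≤ ‖S (hφ.toLp φ)‖ := by
  have hpointwise : ∀ x, ‖K • φ (x + t)‖ ≤ ‖(w x : ℂ) * φ (x + t)‖ := by
    intro x
    rw [norm_smul, norm_mul, Complex.norm_real, Real.norm_eq_abs, Real.norm_eq_abs,
      abs_of_nonneg hK]
    by_cases hx : φ (x + t) = 0
    · simp [hx]
    · exact mul_le_mul_of_nonneg_right (hw x hx) (norm_nonneg _)
  have hS' : S (hφ.toLp φ) =ᵐ[volume.restrict (Ioi 0)] fun x => (w x : ℂ) * φ (x + t) := by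
    filter_upwards [hS (hφ.toLp φ), ae_eq_comp_add_right_restrict_Ioi ht hφ.coeFn_toLp]
      with x hSx hφx
    rw [hSx, hφx]
  have henorm : ENNReal.ofReal K * ‖hφ.toLp φ‖ₑ ≤ ‖S (hφ.toLp φ)‖ₑ := by
    rw [Lp.enorm_toLp, Lp.enorm_def, eLpNorm_congr_ae hS',
      ← eLpNorm_comp_add_right_restrict_Ioi_of_support_subset ht hsupp,
      ← Real.enorm_of_nonneg hK, ← eLpNorm_const_smul]
    exact eLpNorm_mono hpointwise
  rwa [← ofReal_norm, ← ofReal_norm, ← ENNReal.ofReal_mul hK,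
    ENNReal.ofReal_le_ofReal_iff (by positivity)] at henorm

theorem abs_le_opNorm_of_tendsto
    (hS : ∀ f, S f =ᵐ[volume.restrict (Ioi 0)] fun x => (w x : ℂ) * f (x + t)) (ht : 0 ≤ t)
    {L : ℝ} (hw : Tendsto w (𝓝[>] 0) (𝓝 L)) : |L| ≤ ‖S‖ := by
  refine le_of_forall_lt_imp_le_of_dense fun K hK => ?_
  rcases le_or_gt K 0 with hK0 | hK0
  · exact hK0.trans (norm_nonneg _)
  obtain ⟨ε, hε : 0 < ε, hwε⟩ :=
    mem_nhdsGT_iff_exists_Ioo_subset.1 (hw.abs.eventually (lt_mem_nhds hK))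
  have hμ : volume.restrict (Ioi 0) (Ioo t (t + ε)) = ENNReal.ofReal ε := by
    rw [Measure.restrict_apply measurableSet_Ioo,
      inter_eq_self_of_subset_left (Ioo_subset_Ioi_self.trans (Ioi_subset_Ioi ht)),
      Real.volume_Ioo, add_sub_cancel_left]
  have hφ : MemLp ((Ioo t (t + ε)).indicator fun _ => (1 : ℂ)) p (volume.restrict (Ioi 0)) :=
    memLp_indicator_const p measurableSet_Ioo 1 (Or.inr (by simp [hμ]))
  have hnorm_pos : 0 < ‖hφ.toLp _‖ := by
    rw [Lp.norm_toLp, eLpNorm_indicator_const' measurableSet_Ioo (by simp [hμ, hε])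
      (zero_lt_one.trans_le Fact.out).ne', hμ]
    exact ENNReal.toReal_pos (by simp [hε]) (by simp)
  have hKφ := mul_norm_le_norm_apply_of_support_subset hS ht hφ
    (support_indicator_subset.trans Ioo_subset_Ioi_self) hK0.le fun x hx => by
      have hxt := mem_of_indicator_ne_zero hx
      exact (hwε ⟨by linarith [hxt.1], by linarith [hxt.2]⟩).le
  exact le_of_mul_le_mul_right (hKφ.trans (S.le_opNorm _)) hnorm_pos

end WeightedShift

open Real in
theorem exp_mul_rpow_add_div_exp_le {c β x t : ℝ} (hc : 0 ≤ c) (hβ0 : 0 ≤ β) (hβ1 : β ≤ 1)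
    (hx : 0 ≤ x) (ht : 0 ≤ t) : exp (c * (x + t) ^ β) / exp (c * x ^ β) ≤ exp (c * t ^ β) := by
  rw [← exp_sub, exp_le_exp, ← mul_sub]
  exact mul_le_mul_of_nonneg_left (sub_le_iff_le_add'.2 (rpow_add_le_add_rpow hx ht hβ0 hβ1)) hc

open Real in
theorem tendsto_exp_mul_rpow_add_div_exp (c t : ℝ) {β : ℝ} (hβ : 0 < β) :
    Tendsto (fun x => exp (c * (x + t) ^ β) / exp (c * x ^ β)) (𝓝 0) (𝓝 (exp (c * t ^ β))) := by
  simp_rw [← exp_sub]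
  have hcont : Continuous fun x : ℝ => exp (c * (x + t) ^ β - c * x ^ β) := by
    have := continuous_rpow_const hβ.le
    fun_prop
  simpa [zero_rpow hβ.ne'] using hcont.tendsto 0

/-- Let `c > 0`, `0 < γ < 1`, `a x = exp (c x^{1-γ})`, and let `T` be
the family of operators on `L²(0,∞)` given by `(T_t f) x = (a (x+t) / a x) f (x+t)`.
Then `‖T t‖ = exp (c t^{1-γ})` for every `t ≥ 0`, the function `t ↦ c t^{1-γ}` is concave
on `[0,∞)` (i.e. `t ↦ exp (c t^{1-γ})` is log-concave), and hence `‖T t‖` coincides with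
its upper log-concave envelope `N = exp ν`. -/
theorem stmt_13
    (c γ : ℝ) (hc : 0 < c) (hγ0 : 0 < γ) (hγ1 : γ < 1)
    (a : ℝ → ℝ) (ha : ∀ x, a x = Real.exp (c * x ^ (1 - γ)))
    (T : ℝ → (Lp ℂ 2 (volume.restrict (Set.Ioi (0:ℝ))) →L[ℂ]
        Lp ℂ 2 (volume.restrict (Set.Ioi (0:ℝ)))))
    (hT : ∀ t : ℝ, 0 ≤ t → ∀ f : Lp ℂ 2 (volume.restrict (Set.Ioi (0:ℝ))),
      (T t f : ℝ → ℂ) =ᵐ[volume.restrict (Set.Ioi (0:ℝ))]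
        fun x => ((a (x + t) / a x : ℝ) : ℂ) * f (x + t)) :
    (∀ t : ℝ, 0 ≤ t → ‖T t‖ = Real.exp (c * t ^ (1 - γ))) ∧
    ConcaveOn ℝ (Set.Ici (0:ℝ)) (fun t => c * t ^ (1 - γ)) ∧
    (∀ ν : ℝ → ℝ, ConcaveOn ℝ (Set.Ici (0:ℝ)) ν →
      (∀ t : ℝ, 0 ≤ t → Real.log ‖T t‖ ≤ ν t) →
      (∀ κ : ℝ → ℝ, ConcaveOn ℝ (Set.Ici (0:ℝ)) κ →
        (∀ t : ℝ, 0 ≤ t → Real.log ‖T t‖ ≤ κ t) → ∀ t : ℝ, 0 ≤ t → ν t ≤ κ t) →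
      ∀ t : ℝ, 0 ≤ t → Real.exp (ν t) = ‖T t‖) := by
  obtain rfl : a = fun x => Real.exp (c * x ^ (1 - γ)) := funext ha
  have hβ0 : 0 < 1 - γ := by linarith
  have hβ1 : 1 - γ ≤ 1 := by linarith
  have hnorm : ∀ t, 0 ≤ t → ‖T t‖ = Real.exp (c * t ^ (1 - γ)) := fun t ht => by
    have hlower := abs_le_opNorm_of_tendsto (hT t ht) ht
      ((tendsto_exp_mul_rpow_add_div_exp c t hβ0).mono_left nhdsWithin_le_nhds)
    rw [abs_of_pos (Real.exp_pos _)] at hlower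
    refine le_antisymm ?_ hlower
    refine opNorm_le_of_abs_weight_le (hT t ht) ht (Real.exp_pos _).le fun x hx => ?_
    rw [abs_of_pos (by positivity)]
    exact exp_mul_rpow_add_div_exp_le hc.le hβ0.le hβ1 hx.le ht
  have hlog : ∀ t, 0 ≤ t → Real.log ‖T t‖ = c * t ^ (1 - γ) := fun t ht => by
    rw [hnorm t ht, Real.log_exp]
  have hconcave : ConcaveOn ℝ (Ici 0) fun t : ℝ => c * t ^ (1 - γ) :=
    (Real.concaveOn_rpow hβ0.le hβ1).smul hc.le
  refine ⟨hnorm, hconcave, fun ν _ hmaj hmin t ht => ?_⟩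
  have hνt : ν t = c * t ^ (1 - γ) :=
    le_antisymm (hmin _ hconcave (fun s hs => (hlog s hs).le) t ht) (hlog t ht ▸ hmaj t ht)
  rw [hνt, hnorm t ht]
end

section
/- Let A be the 2×2 complex matrix with A_{1,2} = 1 and all other entries 0, regarded as an operator on ℂ² with the Euclidean norm. Then (i) for every λ ∈ ℂ with |λ| = r > 0, ‖(λI − A)^{−1}‖ = 1/(2r²) + √(1 + 1/(4r²)) / r; and (ii) for every t ≥ 0, ‖e^{At}‖ = t/2 + √(1 + t²/4}. -/
/-!
Since `A² = 0`, both operators have the form `T = !![a, b; 0, a]`: the resolvent is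
`!![λ⁻¹, λ⁻²; 0, λ⁻¹]` and `e^{tA} = !![1, t; 0, 1]`. For such `T`,
`‖T‖ = s := |b|/2 + √(|a|² + |b|²/4)`, the larger root of `s² = |b| s + |a|²`.
The upper bound comes from the identity
`s (s² (u² + v²) - (|a| u + |b| v)² - |a|² v²) = |b| (s u - |a| v)²`,
and the bound is attained at `(conj a · ω, s)`, where `b = |b| ω` with `|ω| = 1`.
-/

open Matrix ComplexConjugate

theorem NormedSpace.exp_eq_one_add_of_sq_eq_zero {𝔸 : Type*} [Ring 𝔸] [Algebra ℚ 𝔸]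
    [TopologicalSpace 𝔸] [IsTopologicalRing 𝔸] {N : 𝔸} (hN : N ^ 2 = 0) :
    NormedSpace.exp N = 1 + N := by
  have hvanish : ∀ n ∉ Finset.range 2, (n.factorial⁻¹ : ℚ) • N ^ n = 0 := fun n hn => by
    rw [pow_eq_zero_of_le (by rw [Finset.mem_range] at hn; omega) hN, smul_zero]
  rw [congrFun NormedSpace.exp_eq_tsum_rat N, tsum_eq_sum hvanish]
  simp [Finset.sum_range_succ]

theorem exp_smul_shift {K : Type*} [Field K] [CharZero K] [TopologicalSpace K]
    [IsTopologicalRing K] (c : K) :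
    NormedSpace.exp (c • !![0, 1; 0, 0] : Matrix (Fin 2) (Fin 2) K) = !![1, c; 0, 1] := by
  have hsq : (c • !![0, 1; 0, 0] : Matrix (Fin 2) (Fin 2) K) ^ 2 = 0 := by
    ext i j; fin_cases i <;> fin_cases j <;> simp [sq]
  rw [NormedSpace.exp_eq_one_add_of_sq_eq_zero hsq]
  ext i j; fin_cases i <;> fin_cases j <;> simp

theorem inv_smul_one_sub_shift {K : Type*} [Field K] {lam : K} (hlam : lam ≠ 0) :
    (lam • (1 : Matrix (Fin 2) (Fin 2) K) - !![0, 1; 0, 0])⁻¹ =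
      !![lam⁻¹, lam⁻¹ ^ 2; 0, lam⁻¹] := by
  apply inv_eq_right_inv
  rw [← Matrix.ext_iff]
  simp [Fin.forall_fin_two, Matrix.mul_apply, Fin.sum_univ_two, hlam, sq]

noncomputable def topSingularValue (α β : ℝ) : ℝ := β / 2 + √(α ^ 2 + β ^ 2 / 4)

theorem topSingularValue_sq (α β : ℝ) :
    topSingularValue α β ^ 2 = α ^ 2 + β * topSingularValue α β := by
  have hroot := Real.sq_sqrt (by positivity : 0 ≤ α ^ 2 + β ^ 2 / 4)
  unfold topSingularValue
  linear_combination hroot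

theorem le_topSingularValue (α β : ℝ) : β ≤ topSingularValue α β := by
  have : β / 2 ≤ √(α ^ 2 + β ^ 2 / 4) :=
    Real.le_sqrt_of_sq_le (by nlinarith [sq_nonneg α])
  unfold topSingularValue
  linarith

theorem sq_add_sq_le_topSingularValue_sq {α β : ℝ} (hβ : 0 ≤ β) (u v : ℝ) :
    (α * u + β * v) ^ 2 + (α * v) ^ 2 ≤ topSingularValue α β ^ 2 * (u ^ 2 + v ^ 2) := by
  set s := topSingularValue α β
  have hs := topSingularValue_sq α β
  have hβs := le_topSingularValue α β
  rcases (hβ.trans hβs).eq_or_lt with hs0 | hs0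
  · have hβ0 : β = 0 := by linarith
    have hα0 : α = 0 := by rw [← hs0, hβ0] at hs; nlinarith
    simp only [hα0, hβ0, zero_mul, add_zero, zero_pow two_ne_zero]
    positivity
  · have key : s * (s ^ 2 * (u ^ 2 + v ^ 2) - ((α * u + β * v) ^ 2 + (α * v) ^ 2)) =
        β * (s * u - α * v) ^ 2 := by
      linear_combination (s * u ^ 2 + s * v ^ 2 + β * v ^ 2) * hs
    nlinarith [mul_nonneg hβ (sq_nonneg (s * u - α * v))]

section UpperTriangular

variable (a b : ℂ)

theorem norm_sq_toEuclideanCLM_upperTriangular_apply (x : EuclideanSpace ℂ (Fin 2)) :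
    ‖toEuclideanCLM (𝕜 := ℂ) !![a, b; 0, a] x‖ ^ 2 =
      ‖a * x 0 + b * x 1‖ ^ 2 + ‖a * x 1‖ ^ 2 := by
  rw [EuclideanSpace.norm_sq_eq, Fin.sum_univ_two, ofLp_toEuclideanCLM]
  simp [mulVec, dotProduct, Fin.sum_univ_two]

theorem norm_toEuclideanCLM_upperTriangular_apply_le (x : EuclideanSpace ℂ (Fin 2)) :
    ‖toEuclideanCLM (𝕜 := ℂ) !![a, b; 0, a] x‖ ≤ topSingularValue ‖a‖ ‖b‖ * ‖x‖ := by
  have hs := (norm_nonneg b).trans (le_topSingularValue ‖a‖ ‖b‖)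
  have hx : ‖x‖ ^ 2 = ‖x 0‖ ^ 2 + ‖x 1‖ ^ 2 := by
    simp [EuclideanSpace.norm_sq_eq, Fin.sum_univ_two]
  have htri : ‖a * x 0 + b * x 1‖ ≤ ‖a‖ * ‖x 0‖ + ‖b‖ * ‖x 1‖ :=
    (norm_add_le _ _).trans_eq (by rw [norm_mul, norm_mul])
  rw [← pow_le_pow_iff_left₀ (norm_nonneg _) (by positivity) two_ne_zero,
    norm_sq_toEuclideanCLM_upperTriangular_apply, mul_pow, hx, norm_mul]
  calc ‖a * x 0 + b * x 1‖ ^ 2 + (‖a‖ * ‖x 1‖) ^ 2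
      ≤ (‖a‖ * ‖x 0‖ + ‖b‖ * ‖x 1‖) ^ 2 + (‖a‖ * ‖x 1‖) ^ 2 := by gcongr
    _ ≤ _ := sq_add_sq_le_topSingularValue_sq (norm_nonneg b) _ _

theorem exists_norm_toEuclideanCLM_upperTriangular_apply_eq :
    ∃ x : EuclideanSpace ℂ (Fin 2), topSingularValue ‖a‖ ‖b‖ ≤ ‖x‖ ∧
      ‖toEuclideanCLM (𝕜 := ℂ) !![a, b; 0, a] x‖ = topSingularValue ‖a‖ ‖b‖ * ‖x‖ := by
  set s := topSingularValue ‖a‖ ‖b‖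
  have hs0 : 0 ≤ s := (norm_nonneg b).trans (le_topSingularValue ‖a‖ ‖b‖)
  obtain ⟨ω, hω, hb⟩ : ∃ ω : ℂ, ‖ω‖ = 1 ∧ b = ‖b‖ * ω :=
    ⟨_, Complex.norm_exp_ofReal_mul_I _, (Complex.norm_mul_exp_arg_mul_I b).symm⟩
  refine ⟨!₂[conj a * ω, s], ?_, ?_⟩
  · simpa [abs_of_nonneg hs0] using PiLp.norm_apply_le !₂[conj a * ω, (s : ℂ)] 1
  · have hTx : a * (conj a * ω) + b * s = ((s ^ 2 : ℝ) : ℂ) * ω := by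
      rw [topSingularValue_sq]
      push_cast
      linear_combination ω * Complex.mul_conj' a + (s : ℂ) * hb
    have hx : ‖(!₂[conj a * ω, (s : ℂ)] : EuclideanSpace ℂ (Fin 2))‖ ^ 2 =
        ‖a‖ ^ 2 + s ^ 2 := by
      simp [EuclideanSpace.norm_sq_eq, Fin.sum_univ_two, hω, abs_of_nonneg hs0]
    rw [← sq_eq_sq₀ (norm_nonneg _) (by positivity),
      norm_sq_toEuclideanCLM_upperTriangular_apply, mul_pow, hx]
    simp only [cons_val_zero, cons_val_one, hTx, norm_mul, Complex.norm_real, hω,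
      Real.norm_of_nonneg hs0, Real.norm_of_nonneg (sq_nonneg s)]
    ring

theorem norm_toEuclideanCLM_upperTriangular :
    ‖toEuclideanCLM (𝕜 := ℂ) !![a, b; 0, a]‖ = topSingularValue ‖a‖ ‖b‖ := by
  have hs0 := (norm_nonneg b).trans (le_topSingularValue ‖a‖ ‖b‖)
  refine ContinuousLinearMap.opNorm_eq_of_bounds hs0
    (norm_toEuclideanCLM_upperTriangular_apply_le a b) fun N hN hbound => ?_
  obtain ⟨x, hsx, hx⟩ := exists_norm_toEuclideanCLM_upperTriangular_apply_eq a b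
  rcases hs0.eq_or_lt with hs | hs
  · exact hs ▸ hN
  · exact le_of_mul_le_mul_right (hx ▸ hbound x) (hs.trans_le hsx)

end UpperTriangular

/-- Let `A = [[0,1],[0,0]]` act on `ℂ²` with the Euclidean norm.  Then
(i) for `|λ| = r > 0`, `‖(λI − A)⁻¹‖ = 1/(2r²) + √(1 + 1/(4r²))/r`; and (ii) for `t ≥ 0`,
`‖e^{At}‖ = t/2 + √(1 + t²/4)`. -/
theorem stmt_14 (A : Matrix (Fin 2) (Fin 2) ℂ) (hA : A = !![0, 1; 0, 0]) :
    (∀ lam : ℂ, ∀ r : ℝ, ‖lam‖ = r → 0 < r →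
      ‖Matrix.toEuclideanCLM (𝕜 := ℂ) ((lam • (1 : Matrix (Fin 2) (Fin 2) ℂ) - A)⁻¹)‖ =
        1 / (2 * r ^ 2) + Real.sqrt (1 + 1 / (4 * r ^ 2)) / r) ∧
    (∀ t : ℝ, 0 ≤ t →
      ‖Matrix.toEuclideanCLM (𝕜 := ℂ) (NormedSpace.exp ((t : ℂ) • A))‖ =
        t / 2 + Real.sqrt (1 + t ^ 2 / 4)) := by
  subst hA
  constructor
  · rintro lam r rfl hr
    rw [inv_smul_one_sub_shift (norm_pos_iff.mp hr), norm_toEuclideanCLM_upperTriangular,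
      norm_pow, norm_inv, topSingularValue]
    have hsqrt : √(‖lam‖⁻¹ ^ 2 + (‖lam‖⁻¹ ^ 2) ^ 2 / 4) =
        √(1 + 1 / (4 * ‖lam‖ ^ 2)) / ‖lam‖ := by
      rw [Real.sqrt_eq_iff_mul_self_eq (by positivity) (by positivity), div_mul_div_comm,
        Real.mul_self_sqrt (by positivity)]
      field_simp
    rw [hsqrt]
    field_simp
  · intro t ht
    rw [exp_smul_shift, norm_toEuclideanCLM_upperTriangular, Complex.norm_real,
      Real.norm_of_nonneg ht]
    simp [topSingularValue]
end

section
/- Let M₂ be a real symmetric n×n matrix with non-positive off-diagonal entries, D a diagonal n×n matrix with positive diagonal entries, and M₁ = D M₂ D^{−1}. Then for every t ≥ 0 the matrix e^{−M₁ t} has non-negative entries; and if additionally M₁ᵀ𝟙 ≥ 0 entrywise (𝟙 denoting the vector with all entries 1), then ‖e^{−M₁ t} f‖₁ ≤ ‖f‖₁ for every f ∈ ℂ^n and every t ≥ 0. -/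
/-!
A matrix `B` with nonnegative off-diagonal entries becomes entrywise nonnegative after adding a
large multiple `c • 1` of the identity, and `exp (B + c • 1) = e^c • exp B`. The exponential
series of a nonnegative matrix has nonnegative terms, so `exp B ≥ 0`; if moreover the column sums
of `B` are `≤ 0`, those of `B + c • 1` are `≤ c`, those of its powers `≤ c^k`, hence those of
`exp B` are `≤ e^{-c} e^c = 1`. A nonnegative matrix with column sums `≤ 1` is an `ℓ¹`
contraction. For `M₁ = D M₂ D⁻¹` with `D > 0` the off-diagonal entries keep the sign of those of
`M₂`, so all this applies to `B = -t M₁`.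
-/

open scoped Matrix Nat
open NormedSpace

namespace Matrix

section Nonneg

variable {ι : Type*} [Fintype ι] [DecidableEq ι]

theorem sum_pow_apply_le_pow {N : Matrix ι ι ℝ} (hN : ∀ i j, 0 ≤ N i j) {c : ℝ} (hc : 0 ≤ c)
    (hcol : ∀ j, ∑ i, N i j ≤ c) (k : ℕ) (j : ι) : ∑ i, (N ^ k) i j ≤ c ^ k := by
  induction k generalizing j with
  | zero => simp [one_apply]
  | succ k ih =>
    calc ∑ i, (N ^ (k + 1)) i j = ∑ l, (∑ i, (N ^ k) i l) * N l j := by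
          simp only [pow_succ, mul_apply, Finset.sum_mul]
          exact Finset.sum_comm
      _ ≤ ∑ l, c ^ k * N l j :=
          Finset.sum_le_sum fun l _ => mul_le_mul_of_nonneg_right (ih l) (hN l j)
      _ = c ^ k * ∑ l, N l j := (Finset.mul_sum ..).symm
      _ ≤ c ^ (k + 1) := by
          rw [pow_succ]
          exact mul_le_mul_of_nonneg_left (hcol j) (pow_nonneg hc k)

theorem hasSum_exp_apply (A : Matrix ι ι ℝ) (i j : ι) :
    HasSum (fun k : ℕ => (k !⁻¹ : ℝ) * (A ^ k) i j) (exp A i j) := by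
  have h := open scoped Norms.Operator in exp_series_hasSum_exp' (𝕂 := ℝ) A
  exact Pi.hasSum.mp (Pi.hasSum.mp h i) j

theorem exp_apply_nonneg_of_nonneg {N : Matrix ι ι ℝ} (hN : ∀ i j, 0 ≤ N i j) (i j : ι) :
    0 ≤ exp N i j :=
  (hasSum_exp_apply N i j).nonneg fun k => mul_nonneg (by positivity) (pow_apply_nonneg hN k i j)

theorem sum_exp_apply_le_exp {N : Matrix ι ι ℝ} (hN : ∀ i j, 0 ≤ N i j) {c : ℝ} (hc : 0 ≤ c)
    (hcol : ∀ j, ∑ i, N i j ≤ c) (j : ι) : ∑ i, exp N i j ≤ Real.exp c := by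
  have hsum := hasSum_sum fun i (_ : i ∈ Finset.univ) => hasSum_exp_apply N i j
  have hexp : HasSum (fun k : ℕ => (k !⁻¹ : ℝ) • c ^ k) (Real.exp c) :=
    Real.exp_eq_exp_ℝ ▸ exp_series_hasSum_exp' c
  refine hasSum_le (fun k => ?_) hsum hexp
  rw [← Finset.mul_sum, smul_eq_mul]
  exact mul_le_mul_of_nonneg_left (sum_pow_apply_le_pow hN hc hcol k j) (by positivity)

theorem exp_add_smul_one (B : Matrix ι ι ℝ) (c : ℝ) :
    exp (B + c • 1) = Real.exp c • exp B := by
  have hc : exp (c • 1 : Matrix ι ι ℝ) = Real.exp c • 1 := by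
    rw [← diagonal_one, ← diagonal_smul, exp_diagonal, Pi.exp_def]
    simp [Real.exp_eq_exp_ℝ, smul_one_eq_diagonal]
  rw [exp_add_of_commute _ _ ((Commute.one_right B).smul_right c), hc, mul_smul_one]

theorem exists_nonneg_add_smul_one_nonneg {B : Matrix ι ι ℝ} (hoff : ∀ i j, i ≠ j → 0 ≤ B i j) :
    ∃ c : ℝ, 0 ≤ c ∧ ∀ i j, 0 ≤ (B + c • 1) i j := by
  refine ⟨∑ i, |B i i|, Finset.sum_nonneg fun i _ => abs_nonneg _, fun i j => ?_⟩
  rcases eq_or_ne i j with rfl | hij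
  · have hle : |B i i| ≤ ∑ k, |B k k| :=
      Finset.single_le_sum (f := fun k => |B k k|) (fun k _ => abs_nonneg _) (Finset.mem_univ i)
    simp only [add_apply, smul_apply, one_apply_eq, smul_eq_mul, mul_one]
    linarith [neg_abs_le (B i i)]
  · simpa [one_apply_ne hij] using hoff i j hij

theorem exp_apply_nonneg_of_offDiag_nonneg {B : Matrix ι ι ℝ}
    (hoff : ∀ i j, i ≠ j → 0 ≤ B i j) (i j : ι) : 0 ≤ exp B i j := by
  obtain ⟨c, -, hN⟩ := exists_nonneg_add_smul_one_nonneg hoff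
  have h := exp_apply_nonneg_of_nonneg hN i j
  rw [exp_add_smul_one, smul_apply, smul_eq_mul] at h
  exact (mul_nonneg_iff_of_pos_left (Real.exp_pos c)).mp h

theorem sum_exp_apply_le_one_of_offDiag_nonneg {B : Matrix ι ι ℝ}
    (hoff : ∀ i j, i ≠ j → 0 ≤ B i j) (hcol : ∀ j, ∑ i, B i j ≤ 0) (j : ι) :
    ∑ i, exp B i j ≤ 1 := by
  obtain ⟨c, hc, hN⟩ := exists_nonneg_add_smul_one_nonneg hoff
  have hcolN : ∀ j, ∑ i, (B + c • 1) i j ≤ c := fun j => by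
    simpa [Finset.sum_add_distrib, one_apply] using hcol j
  have h := sum_exp_apply_le_exp hN hc hcolN j
  simp only [exp_add_smul_one, smul_apply, smul_eq_mul, ← Finset.mul_sum] at h
  exact le_of_mul_le_mul_left (by simpa using h) (Real.exp_pos c)

end Nonneg

theorem sum_norm_map_ofReal_mulVec_le {m n : Type*} [Fintype m] [Fintype n]
    {E : Matrix m n ℝ} (hE : ∀ i j, 0 ≤ E i j) (hcol : ∀ j, ∑ i, E i j ≤ 1) (f : n → ℂ) :
    ∑ i, ‖(E.map (fun x : ℝ => (x : ℂ)) *ᵥ f) i‖ ≤ ∑ j, ‖f j‖ :=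
  calc ∑ i, ‖(E.map (fun x : ℝ => (x : ℂ)) *ᵥ f) i‖
      ≤ ∑ i, ∑ j, E i j * ‖f j‖ := Finset.sum_le_sum fun i _ => by
        refine (norm_sum_le _ _).trans_eq (Finset.sum_congr rfl fun j _ => ?_)
        simp only [map_apply, norm_mul, Complex.norm_real, Real.norm_of_nonneg (hE i j)]
    _ = ∑ j, (∑ i, E i j) * ‖f j‖ := by
        simp only [Finset.sum_mul]
        exact Finset.sum_comm
    _ ≤ ∑ j, ‖f j‖ := Finset.sum_le_sum fun j _ =>
        mul_le_of_le_one_left (norm_nonneg _) (hcol j)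

theorem diagonal_mul_mul_inv_diagonal_apply {ι α : Type*} [Fintype ι] [DecidableEq ι] [Field α]
    {d : ι → α} (hd : ∀ i, d i ≠ 0) (A : Matrix ι ι α) (i j : ι) :
    (diagonal d * A * (diagonal d)⁻¹) i j = d i * A i j / d j := by
  have hunit : IsUnit (diagonal d).det := by
    simpa [det_diagonal, Finset.prod_ne_zero_iff] using hd
  have h := nonsing_inv_mul_cancel_right (diagonal d) (diagonal d * A) hunit
  have hij := congr_fun (congr_fun h i) j
  rw [mul_diagonal, diagonal_mul] at hij
  exact eq_div_of_mul_eq (hd j) hij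

end Matrix

theorem stmt_16_general {n : ℕ}
    (M₂ : Matrix (Fin n) (Fin n) ℝ)
    (hoff : ∀ i j : Fin n, i ≠ j → M₂ i j ≤ 0)
    (d : Fin n → ℝ) (hd : ∀ i, 0 < d i)
    (M₁ : Matrix (Fin n) (Fin n) ℝ)
    (hM₁ : M₁ = Matrix.diagonal d * M₂ * (Matrix.diagonal d)⁻¹) :
    (∀ t : ℝ, 0 ≤ t → ∀ i j : Fin n, 0 ≤ NormedSpace.exp ((-t) • M₁) i j) ∧
    ((∀ j : Fin n, 0 ≤ ∑ i : Fin n, M₁ i j) →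
      ∀ t : ℝ, 0 ≤ t → ∀ f : Fin n → ℂ,
        ∑ i : Fin n,
            ‖((((NormedSpace.exp ((-t) • M₁)).map
              (fun x : ℝ => (x : ℂ))) *ᵥ f) i)‖ ≤
          ∑ i : Fin n, ‖f i‖) := by
  have hM₁_off : ∀ i j, i ≠ j → M₁ i j ≤ 0 := fun i j hij => by
    rw [hM₁, Matrix.diagonal_mul_mul_inv_diagonal_apply (fun i => (hd i).ne')]
    exact div_nonpos_of_nonpos_of_nonneg
      (mul_nonpos_of_nonneg_of_nonpos (hd i).le (hoff i j hij)) (hd j).le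
  have hB_off : ∀ t : ℝ, 0 ≤ t → ∀ i j, i ≠ j → 0 ≤ ((-t) • M₁) i j := fun t ht i j hij =>
    mul_nonneg_of_nonpos_of_nonpos (neg_nonpos.mpr ht) (hM₁_off i j hij)
  refine ⟨fun t ht => Matrix.exp_apply_nonneg_of_offDiag_nonneg (hB_off t ht),
    fun hcol t ht => ?_⟩
  refine Matrix.sum_norm_map_ofReal_mulVec_le
    (Matrix.exp_apply_nonneg_of_offDiag_nonneg (hB_off t ht))
    (Matrix.sum_exp_apply_le_one_of_offDiag_nonneg (hB_off t ht) fun j => ?_)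
  simpa only [Matrix.smul_apply, smul_eq_mul, ← Finset.mul_sum] using
    mul_nonpos_of_nonpos_of_nonneg (neg_nonpos.mpr ht) (hcol j)

/-- Let `M₂` be a real symmetric `n×n` matrix with non-positive
off-diagonal entries, `D = diagonal d` with `d > 0`, and `M₁ = D M₂ D⁻¹`.  Then
`e^{−M₁ t}` has non-negative entries for all `t ≥ 0`; and if moreover `M₁ᵀ 𝟙 ≥ 0`
entrywise, then `e^{−M₁ t}` is an `l¹` contraction on `ℂⁿ`. -/
theorem stmt_16 {n : ℕ}
    (M₂ : Matrix (Fin n) (Fin n) ℝ) (hsym : M₂.IsSymm)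
    (hoff : ∀ i j : Fin n, i ≠ j → M₂ i j ≤ 0)
    (d : Fin n → ℝ) (hd : ∀ i, 0 < d i)
    (M₁ : Matrix (Fin n) (Fin n) ℝ)
    (hM₁ : M₁ = Matrix.diagonal d * M₂ * (Matrix.diagonal d)⁻¹) :
    (∀ t : ℝ, 0 ≤ t → ∀ i j : Fin n, 0 ≤ NormedSpace.exp ((-t) • M₁) i j) ∧
    ((∀ j : Fin n, 0 ≤ ∑ i : Fin n, M₁ i j) →
      ∀ t : ℝ, 0 ≤ t → ∀ f : Fin n → ℂ,
        ∑ i : Fin n,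
            ‖((((NormedSpace.exp ((-t) • M₁)).map
              (fun x : ℝ => (x : ℂ))) *ᵥ f) i)‖ ≤
          ∑ i : Fin n, ‖f i‖) :=
  stmt_16_general M₂ hoff d hd M₁ hM₁
end

section
/- Let M₂ be a real symmetric n×n matrix, λ an eigenvalue of M₂ of multiplicity 1 with eigenvector f ≠ 0, D a diagonal n×n matrix with positive diagonal entries, and M₁ = D M₂ D^{−1}. Define P_λ by P_λ φ = (⟨φ, D^{−1} f⟩ / ⟨f, f⟩) D f. Then P_λ² = P_λ, P_λ M₁ = M₁ P_λ = λ P_λ, and the operator norm of P_λ with respect to the l¹ norm on ℂ^n equals ‖Df‖₁ · ‖D^{−1} f‖_∞ / ⟨f, f⟩. -/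
/-!
`P` is the rank-one matrix `(v ⬝ u)⁻¹ u vᵀ` built from the right eigenvector `u = D f` and the
left eigenvector `v = D⁻¹ f` of `M₁ = D M₂ D⁻¹` (it is a left eigenvector because `M₂` is
symmetric), and `v ⬝ u = ⟨f, f⟩`. Idempotence and `P M₁ = M₁ P = λ P` hold for any such matrix.
The operator norm on `l¹` of a matrix is its largest column sum, which for `u vᵀ` is
`‖u‖₁ ‖v‖_∞`.
-/

open Matrix

section SpectralProjection

variable {ι K : Type*} [Fintype ι] [Field K]

def spectralProjection (u v : ι → K) : Matrix ι ι K := (v ⬝ᵥ u)⁻¹ • vecMulVec u v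

theorem spectralProjection_isIdempotentElem (u v : ι → K) :
    IsIdempotentElem (spectralProjection u v) := by
  have hs (s : K) : s⁻¹ * s⁻¹ * s = s⁻¹ := by simpa using mul_self_mul_inv s⁻¹
  rw [IsIdempotentElem, spectralProjection, smul_mul_smul, vecMulVec_mul_vecMulVec,
    vecMulVec_smul, smul_smul, hs]

theorem spectralProjection_mul_of_vecMul_eq_smul {u v : ι → K} {M : Matrix ι ι K} {lam : K}
    (hv : v ᵥ* M = lam • v) : spectralProjection u v * M = lam • spectralProjection u v := by
  rw [spectralProjection, smul_mul, vecMulVec_mul, hv, vecMulVec_smul, smul_comm]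

theorem mul_spectralProjection_of_mulVec_eq_smul {u v : ι → K} {M : Matrix ι ι K} {lam : K}
    (hu : M *ᵥ u = lam • u) : M * spectralProjection u v = lam • spectralProjection u v := by
  rw [spectralProjection, Matrix.mul_smul, mul_vecMulVec, hu, smul_vecMulVec, smul_comm]

end SpectralProjection

section Similarity

variable {ι K : Type*} [Fintype ι] [DecidableEq ι] [Field K] {D M : Matrix ι ι K}
  {f : ι → K} {lam : K}

theorem mulVec_conj_mulVec_eq_smul (hD : IsUnit D.det) (h : M *ᵥ f = lam • f) :
    (D * M * D⁻¹) *ᵥ (D *ᵥ f) = lam • (D *ᵥ f) := by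
  rw [mulVec_mulVec, Matrix.mul_assoc _ D⁻¹ D, nonsing_inv_mul _ hD, Matrix.mul_one,
    ← mulVec_mulVec, h, mulVec_smul]

theorem vecMul_conj_vecMul_eq_smul (hD : IsUnit D.det) (h : f ᵥ* M = lam • f) :
    (f ᵥ* D⁻¹) ᵥ* (D * M * D⁻¹) = lam • (f ᵥ* D⁻¹) := by
  rw [vecMul_vecMul, Matrix.mul_assoc, ← Matrix.mul_assoc D⁻¹, nonsing_inv_mul _ hD,
    Matrix.one_mul, ← vecMul_vecMul, h, smul_vecMul]

end Similarity

theorem Matrix.opNorm_toLpLin_one_one {m n 𝕜 : Type*} [Fintype m] [Fintype n] [DecidableEq n]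
    [NontriviallyNormedField 𝕜] [CompleteSpace 𝕜] (A : Matrix m n 𝕜) :
    ‖LinearMap.toContinuousLinearMap (toLpLin 1 1 A)‖ = ⨆ j, ∑ i, ‖A i j‖ := by
  set T := LinearMap.toContinuousLinearMap (toLpLin 1 1 A)
  have hT : ∀ x i, T x i = ∑ j, A i j * x j := fun x i => rfl
  have hbdd : BddAbove (Set.range fun j => ∑ i, ‖A i j‖) := (Set.finite_range _).bddAbove
  apply le_antisymm
  · refine T.opNorm_le_bound (Real.iSup_nonneg fun j => by positivity) fun x => ?_
    calc ‖T x‖ = ∑ i, ‖∑ j, A i j * x j‖ := by simp only [PiLp.norm_eq_of_L1, hT]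
      _ ≤ ∑ i, ∑ j, ‖A i j‖ * ‖x j‖ := by
        gcongr with i
        exact (norm_sum_le _ _).trans_eq (by simp only [norm_mul])
      _ = ∑ j, (∑ i, ‖A i j‖) * ‖x j‖ := by rw [Finset.sum_comm]; simp only [Finset.sum_mul]
      _ ≤ ∑ j, (⨆ j, ∑ i, ‖A i j‖) * ‖x j‖ := by
        gcongr with j
        exact le_ciSup hbdd j
      _ = (⨆ j, ∑ i, ‖A i j‖) * ‖x‖ := by rw [PiLp.norm_eq_of_L1, Finset.mul_sum]
  · refine Real.iSup_le (fun j => ?_) (norm_nonneg T)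
    calc ∑ i, ‖A i j‖ = ‖T (PiLp.single 1 j (1 : 𝕜))‖ := by
          rw [PiLp.norm_eq_of_L1]
          simp [T, toLpLin_apply]
      _ ≤ ‖T‖ * ‖(PiLp.single 1 j 1 : WithLp 1 (n → 𝕜))‖ := T.le_opNorm _
      _ = ‖T‖ := by simp [PiLp.norm_single]

theorem stmt_17_general {n : ℕ}
    (M₂ : Matrix (Fin n) (Fin n) ℝ) (hsym : M₂.IsSymm)
    (lam : ℝ) (f : Fin n → ℝ)
    (hf : M₂ *ᵥ f = lam • f)
    (d : Fin n → ℝ) (hd : ∀ i, 0 < d i)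
    (M₁ : Matrix (Fin n) (Fin n) ℝ)
    (hM₁ : M₁ = Matrix.diagonal d * M₂ * (Matrix.diagonal d)⁻¹)
    (P : Matrix (Fin n) (Fin n) ℝ)
    (hP : ∀ i j : Fin n, P i j = (d i * f i) * ((d j)⁻¹ * f j) / (∑ k : Fin n, f k ^ 2)) :
    P * P = P ∧
    P * M₁ = lam • P ∧
    M₁ * P = lam • P ∧
    ‖LinearMap.toContinuousLinearMap
        (Matrix.toLin (PiLp.basisFun 1 ℂ (Fin n)) (PiLp.basisFun 1 ℂ (Fin n))
          (P.map (fun x : ℝ => (x : ℂ))))‖ =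
      (∑ i : Fin n, |d i * f i|) * (⨆ j : Fin n, |(d j)⁻¹ * f j|) /
        (∑ k : Fin n, f k ^ 2) := by
  set S := ∑ k, f k ^ 2
  have hD : IsUnit (diagonal d).det := by
    rw [det_diagonal]
    exact (Finset.prod_pos fun i _ => hd i).ne'.isUnit
  have hDinv : (diagonal d)⁻¹ = diagonal fun i => (d i)⁻¹ :=
    inv_eq_right_inv <| by
      rw [diagonal_mul_diagonal, ← diagonal_one]
      exact congrArg diagonal (funext fun i => mul_inv_cancel₀ (hd i).ne')
  have hPproj : P = spectralProjection (diagonal d *ᵥ f) (f ᵥ* (diagonal d)⁻¹) := by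
    have hvu : f ᵥ* (diagonal d)⁻¹ ⬝ᵥ diagonal d *ᵥ f = S := by
      simp only [hDinv, vecMul_diagonal, mulVec_diagonal, dotProduct]
      exact Finset.sum_congr rfl fun k _ => by field_simp [(hd k).ne']
    ext i j
    rw [hP, spectralProjection, hvu, Matrix.smul_apply, vecMulVec_apply, hDinv,
      vecMul_diagonal, mulVec_diagonal, smul_eq_mul]
    ring
  have hleft : f ᵥ* M₂ = lam • f := by rw [← mulVec_transpose, hsym.eq, hf]
  refine ⟨hPproj ▸ (spectralProjection_isIdempotentElem _ _).eq, ?_, ?_, ?_⟩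
  · rw [hPproj, hM₁]
    exact spectralProjection_mul_of_vecMul_eq_smul (vecMul_conj_vecMul_eq_smul hD hleft)
  · rw [hPproj, hM₁]
    exact mul_spectralProjection_of_mulVec_eq_smul (mulVec_conj_mulVec_eq_smul hD hf)
  · have hcol : ∀ j, ∑ i, ‖P.map (fun x : ℝ => (x : ℂ)) i j‖ =
        (∑ i, |d i * f i|) / S * |(d j)⁻¹ * f j| := by
      intro j
      simp only [map_apply, Complex.norm_real, Real.norm_eq_abs, hP, abs_div, abs_mul,
        abs_of_nonneg (show 0 ≤ S by positivity)]
      rw [Finset.sum_div, Finset.sum_mul]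
      exact Finset.sum_congr rfl fun i _ => by ring
    rw [← toLpLin_eq_toLin, opNorm_toLpLin_one_one]
    simp_rw [hcol]
    rw [← Real.mul_iSup_of_nonneg (by positivity)]
    ring

/-- Let `M₂` be a real symmetric `n×n` matrix, `λ` an eigenvalue of
multiplicity 1 with eigenvector `f ≠ 0`, `D = diagonal d` with `d > 0`, and
`M₁ = D M₂ D⁻¹`.  The (matrix of the) spectral projection
`P φ = (⟨φ, D⁻¹ f⟩ / ⟨f, f⟩) D f` satisfies `P² = P`, `P M₁ = M₁ P = λ P`, and its
operator norm on `ℂⁿ` with the `l¹` norm equals `‖D f‖₁ ‖D⁻¹ f‖_∞ / ⟨f, f⟩`. -/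
theorem stmt_17 {n : ℕ}
    (M₂ : Matrix (Fin n) (Fin n) ℝ) (hsym : M₂.IsSymm)
    (lam : ℝ) (f : Fin n → ℝ) (hf0 : f ≠ 0)
    (hf : M₂ *ᵥ f = lam • f)
    (hmult : ∀ g : Fin n → ℝ, M₂ *ᵥ g = lam • g → ∃ c : ℝ, g = c • f)
    (d : Fin n → ℝ) (hd : ∀ i, 0 < d i)
    (M₁ : Matrix (Fin n) (Fin n) ℝ)
    (hM₁ : M₁ = Matrix.diagonal d * M₂ * (Matrix.diagonal d)⁻¹)
    (P : Matrix (Fin n) (Fin n) ℝ)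
    (hP : ∀ i j : Fin n, P i j = (d i * f i) * ((d j)⁻¹ * f j) / (∑ k : Fin n, f k ^ 2)) :
    P * P = P ∧
    P * M₁ = lam • P ∧
    M₁ * P = lam • P ∧
    ‖LinearMap.toContinuousLinearMap
        (Matrix.toLin (PiLp.basisFun 1 ℂ (Fin n)) (PiLp.basisFun 1 ℂ (Fin n))
          (P.map (fun x : ℝ => (x : ℂ))))‖ =
      (∑ i : Fin n, |d i * f i|) * (⨆ j : Fin n, |(d j)⁻¹ * f j|) /
        (∑ k : Fin n, f k ^ 2) :=
  stmt_17_general M₂ hsym lam f hf d hd M₁ hM₁ P hP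
end

section
/- Set s_r = (1 + 1/r)^{1/2} for r ≥ 1, and define d_1 = s_1 and d_r = 1/s_{r−1} + s_r for r ≥ 2. Then for every n ≥ 1 and all complex numbers a_1, ..., a_n, Σ_{r=1}^n d_r |a_r|² − Σ_{r=2}^n (a_r ā_{r−1} + a_{r−1} ā_r) = Σ_{r=2}^n | s_{r−1}^{1/2} a_{r−1} − s_{r−1}^{−1/2} a_r |² + s_n |a_n|². In particular this quantity is non-negative, i.e. the real symmetric tridiagonal n×n matrix M₂ with diagonal entries d_r and entries −1 immediately above and below the diagonal is positive semidefinite. -/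
/-!
Completing the square `r` by `r`: for `t > 0`,
`t |z|² + |w|² / t - 2 Re (w z̄) = |√t z - w / √t|²`.
Since `d r = 1 / s (r-1) + s r`, the term `s (r-1) |a (r-1)|²` left over from the previous
step combines with `|a r|² / s (r-1)` and the coupling `-2 Re (a r ā (r-1))` into one square,
leaving `s r |a r|²` for the next step; after the last step `s n |a n|² ≥ 0` remains.
-/

open Finset ComplexConjugate Matrix
open scoped ComplexOrder

lemma Complex.norm_sqrt_mul_sub_inv_sqrt_mul_sq {t : ℝ} (ht : 0 < t) (z w : ℂ) :
    ‖(Real.sqrt t : ℂ) * z - ((Real.sqrt t : ℂ))⁻¹ * w‖ ^ 2 =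
      t * ‖z‖ ^ 2 + 1 / t * ‖w‖ ^ 2 - (w * conj z + z * conj w).re := by
  have hsqrt : Real.sqrt t ≠ 0 := (Real.sqrt_pos.2 ht).ne'
  have hsq : Real.sqrt t ^ 2 = t := Real.sq_sqrt ht.le
  rw [← Complex.ofReal_inv]
  simp only [Complex.sq_norm, Complex.normSq_apply, Complex.sub_re, Complex.sub_im,
    Complex.mul_re, Complex.mul_im, Complex.ofReal_re, Complex.ofReal_im,
    Complex.add_re, Complex.conj_re, Complex.conj_im]
  field_simp
  linear_combination (t * Real.sqrt t ^ 2 * (z.re ^ 2 + z.im ^ 2) - (w.re ^ 2 + w.im ^ 2)) * hsq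

lemma Complex.mul_conj_add_mul_conj_eq_re (z w : ℂ) :
    z * conj w + w * conj z = ((z * conj w + w * conj z).re : ℂ) := by
  apply Complex.ext <;> simp only [Complex.add_re, Complex.add_im, Complex.mul_re,
    Complex.mul_im, Complex.conj_re, Complex.conj_im, Complex.ofReal_re, Complex.ofReal_im]
  ring

/-- Rows and columns are indexed from `0`, while `d` and the vectors in `tridiagForm` are indexed
from `1`. -/
def tridiag (d : ℕ → ℝ) (i j : ℕ) : ℂ :=
  if i = j then (d (i + 1) : ℂ) else if i + 1 = j ∨ j + 1 = i then -1 else 0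

noncomputable def tridiagForm (d : ℕ → ℝ) (n : ℕ) (a : ℕ → ℂ) : ℝ :=
  (∑ r ∈ Icc 1 n, d r * ‖a r‖ ^ 2) -
    ∑ r ∈ Icc 2 n, (a r * conj (a (r - 1)) + a (r - 1) * conj (a r)).re

section tridiag

variable (d : ℕ → ℝ)

lemma tridiag_comm (i j : ℕ) : tridiag d i j = tridiag d j i := by
  unfold tridiag
  split_ifs <;> first | rfl | subst_vars; rfl | omega

lemma conj_tridiag (i j : ℕ) : conj (tridiag d i j) = tridiag d i j := by
  unfold tridiag
  split_ifs <;> simp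

lemma sum_range_mul_tridiag {n : ℕ} (hn : 1 ≤ n) (g : ℕ → ℂ) :
    ∑ i ∈ range n, g i * tridiag d i n = -g (n - 1) := by
  obtain ⟨m, rfl⟩ : ∃ m, n = m + 1 := ⟨n - 1, by omega⟩
  rw [sum_range_succ, sum_eq_zero fun i hi => ?_]
  · simp [tridiag]
  · have := mem_range.1 hi
    simp only [tridiag]
    rw [if_neg (by omega), if_neg (by omega), mul_zero]

lemma sum_range_tridiag_mul {n : ℕ} (hn : 1 ≤ n) (g : ℕ → ℂ) :
    ∑ j ∈ range n, tridiag d n j * g j = -g (n - 1) := by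
  simp_rw [tridiag_comm d n, mul_comm _ (g _)]
  exact sum_range_mul_tridiag d hn g

lemma sum_range_sum_range_tridiag (a : ℕ → ℂ) {n : ℕ} (hn : 1 ≤ n) :
    ∑ i ∈ range n, ∑ j ∈ range n, conj (a (i + 1)) * (tridiag d i j * a (j + 1)) =
      tridiagForm d n a := by
  induction n, hn using Nat.le_induction with
  | base =>
    simp only [tridiagForm, tridiag]
    simp [mul_left_comm _ _ (a 1), Complex.conj_mul']
  | succ n hn ih =>
    have hcol : ∑ i ∈ range n, conj (a (i + 1)) * (tridiag d i n * a (n + 1)) =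
        -(conj (a n) * a (n + 1)) := by
      simp_rw [← mul_assoc, ← sum_mul, sum_range_mul_tridiag d hn, Nat.sub_add_cancel hn,
        neg_mul]
    have hrow : ∑ j ∈ range n, conj (a (n + 1)) * (tridiag d n j * a (j + 1)) =
        -(conj (a (n + 1)) * a n) := by
      rw [← mul_sum, sum_range_tridiag_mul d hn (fun j => a (j + 1)), Nat.sub_add_cancel hn,
        mul_neg]
    simp only [sum_range_succ, sum_add_distrib, ih, hcol, hrow]
    simp only [tridiagForm, sum_Icc_succ_top (by omega : 1 ≤ n + 1),
      sum_Icc_succ_top (by omega : 2 ≤ n + 1), Nat.add_sub_cancel, tridiag, if_pos,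
      Complex.ofReal_sub, Complex.ofReal_add, Complex.ofReal_mul, Complex.ofReal_pow,
      ← Complex.mul_conj']
    rw [← Complex.mul_conj_add_mul_conj_eq_re]
    ring

end tridiag

lemma tridiagForm_eq_sum_sq (s d : ℕ → ℝ) (hs : ∀ r, 1 ≤ r → 0 < s r) (hd1 : d 1 = s 1)
    (hd : ∀ r, 2 ≤ r → d r = 1 / s (r - 1) + s r) (a : ℕ → ℂ) {n : ℕ} (hn : 1 ≤ n) :
    tridiagForm d n a =
      (∑ r ∈ Icc 2 n,
          ‖(Real.sqrt (s (r - 1)) : ℂ) * a (r - 1) - ((Real.sqrt (s (r - 1)) : ℂ))⁻¹ * a r‖ ^ 2) +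
        s n * ‖a n‖ ^ 2 := by
  induction n, hn using Nat.le_induction with
  | base => simp [tridiagForm, hd1]
  | succ n hn ih =>
    simp only [tridiagForm] at ih ⊢
    rw [sum_Icc_succ_top (by omega : 1 ≤ n + 1), sum_Icc_succ_top (by omega : 2 ≤ n + 1),
      sum_Icc_succ_top (by omega : 2 ≤ n + 1), Nat.add_sub_cancel, hd (n + 1) (by omega),
      Nat.add_sub_cancel, Complex.norm_sqrt_mul_sub_inv_sqrt_mul_sq (hs n hn)]
    linarith

lemma tridiagForm_nonneg (s d : ℕ → ℝ) (hs : ∀ r, 1 ≤ r → 0 < s r) (hd1 : d 1 = s 1)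
    (hd : ∀ r, 2 ≤ r → d r = 1 / s (r - 1) + s r) (a : ℕ → ℂ) {n : ℕ} (hn : 1 ≤ n) :
    0 ≤ tridiagForm d n a := by
  rw [tridiagForm_eq_sum_sq s d hs hd1 hd a hn]
  exact add_nonneg (sum_nonneg fun _ _ => sq_nonneg _)
    (mul_nonneg (hs n hn).le (sq_nonneg _))

theorem posSemidef_tridiag_of_tridiagForm_nonneg (d : ℕ → ℝ) {n : ℕ} (hn : 1 ≤ n)
    (hform : ∀ a : ℕ → ℂ, 0 ≤ tridiagForm d n a) :
    (Matrix.of fun i j : Fin n => tridiag d i j).PosSemidef := by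
  refine Matrix.posSemidef_iff_dotProduct_mulVec.2 ⟨?_, fun x => ?_⟩
  · ext i j
    simp [tridiag_comm d j, conj_tridiag]
  · let a : ℕ → ℂ := fun r => if h : r - 1 < n then x ⟨r - 1, h⟩ else 0
    have hxa : ∀ i : Fin n, x i = a (i + 1) := fun i => by simp [a]
    have hquad : star x ⬝ᵥ ((Matrix.of fun i j : Fin n => tridiag d i j) *ᵥ x) =
        ∑ i ∈ range n, ∑ j ∈ range n, conj (a (i + 1)) * (tridiag d i j * a (j + 1)) := by
      simp only [dotProduct, Matrix.mulVec, Matrix.of_apply, Pi.star_apply, mul_sum, hxa]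
      rw [← Fin.sum_univ_eq_sum_range]
      exact sum_congr rfl fun i _ => Fin.sum_univ_eq_sum_range (fun j => _ * (_ * a (j + 1))) n
    rw [hquad, sum_range_sum_range_tridiag d a hn]
    exact Complex.zero_le_real.2 (hform a)

/-- With `s r = √(1 + 1/r)`, `d 1 = s 1`, `d r = 1/s (r−1) + s r` for
`r ≥ 2`, one has for all `n ≥ 1` and complex `a₁, …, aₙ`:
`Σ_{r=1}^n d r |a r|² − Σ_{r=2}^n (a r conj (a (r−1)) + a (r−1) conj (a r))
  = Σ_{r=2}^n |√(s (r−1)) a (r−1) − a r / √(s (r−1))|² + s n |a n|²`.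
In particular the tridiagonal matrix `M₂` with diagonal `d` and off-diagonal `−1` is
positive semidefinite. -/
theorem stmt_18
    (s : ℕ → ℝ) (hs : ∀ r : ℕ, 1 ≤ r → s r = Real.sqrt (1 + 1 / (r : ℝ)))
    (d : ℕ → ℝ) (hd1 : d 1 = s 1) (hd : ∀ r : ℕ, 2 ≤ r → d r = 1 / s (r - 1) + s r)
    (n : ℕ) (hn : 1 ≤ n) (a : ℕ → ℂ) :
    ((∑ r ∈ Finset.Icc 1 n, d r * ‖a r‖ ^ 2) -
        ∑ r ∈ Finset.Icc 2 n,
          (a r * (starRingEnd ℂ) (a (r - 1)) + a (r - 1) * (starRingEnd ℂ) (a r)).re =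
      (∑ r ∈ Finset.Icc 2 n,
          ‖(Real.sqrt (s (r - 1)) : ℂ) * a (r - 1) -
            ((Real.sqrt (s (r - 1)) : ℂ))⁻¹ * a r‖ ^ 2) +
        s n * ‖a n‖ ^ 2) ∧
    Matrix.PosSemidef (Matrix.of fun i j : Fin n =>
      if i = j then (d ((i : ℕ) + 1) : ℂ)
      else if (i : ℕ) + 1 = (j : ℕ) ∨ (j : ℕ) + 1 = (i : ℕ) then -1 else 0) := by
  have hs_pos : ∀ r, 1 ≤ r → 0 < s r := fun r hr => by
    rw [hs r hr]
    positivity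
  have hM : (Matrix.of fun i j : Fin n => tridiag d i j).PosSemidef :=
    posSemidef_tridiag_of_tridiagForm_nonneg d hn fun b => tridiagForm_nonneg s d hs_pos hd1 hd b hn
  have hM_eq : (Matrix.of fun i j : Fin n => tridiag d i j) = Matrix.of fun i j : Fin n =>
      if i = j then (d ((i : ℕ) + 1) : ℂ)
      else if (i : ℕ) + 1 = (j : ℕ) ∨ (j : ℕ) + 1 = (i : ℕ) then -1 else 0 := by
    ext i j
    simp only [Matrix.of_apply, tridiag, Fin.val_inj]
  exact ⟨tridiagForm_eq_sum_sq s d hs_pos hd1 hd a hn, hM_eq ▸ hM⟩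
end
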